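/- arXiv:2508.08013 — 6 statements merged into one kernel-verified Lean document; each statement's English description precedes it below -/
import Mathlib

section
/- Let F : ℝ^d → ℝ be twice continuously differentiable with ‖∇²F(θ)‖ ≤ b (operator norm) for every θ ∈ ℝ^d, and let Φ be a random vector in ℝ^d satisfying the perturbation assumption with constants b₁, b₂ > 0. Then for every θ ∈ ℝ^d and every γ > 0, ‖E[Φ (F(θ + γΦ) − F(θ − γΦ))] − 2 b₁ γ ∇F(θ)‖ ≤ b b₂³ γ². -/
/-!
A bound `b` on the Hessian makes `fderiv F` `b`-Lipschitz, and then the second-order terms of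
`F (θ + v)` and `F (θ - v)` cancel: `|F (θ + v) - F (θ - v) - 2 ⟪∇F θ, v⟫| ≤ b ‖v‖²`. With
`v = γ Φ`, the linear part contributes `2 γ E[⟪∇F θ, Φ⟫ Φ] = 2 b₁ γ ∇F θ`, because the second
moment matrix of `Φ` is `b₁ • 1`, while the remainder times `Φ` is at most `b γ² ‖Φ‖³ ≤ b b₂³ γ²`.
-/

universe u v

open MeasureTheory Set
open scoped RealInnerProductSpace

section CentralDifference

variable {E : Type u} {G : Type v} [NormedAddCommGroup E] [NormedSpace ℝ E] [NormedAddCommGroup G]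
  [NormedSpace ℝ G] {f : E → G} {b : ℝ}

theorem norm_fderiv_sub_le_of_norm_iteratedFDeriv_two_le (hf : ContDiff ℝ 2 f)
    (hb : ∀ x, ‖iteratedFDeriv ℝ 2 f x‖ ≤ b) (x y : E) :
    ‖fderiv ℝ f x - fderiv ℝ f y‖ ≤ b * ‖x - y‖ := by
  have hdf : Differentiable ℝ (fderiv ℝ f) :=
    (hf.fderiv_right (m := 1) le_rfl).differentiable one_ne_zero
  refine convex_univ.norm_image_sub_le_of_norm_fderiv_le (fun z _ => hdf z) (fun z _ => ?_)
    (mem_univ y) (mem_univ x)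
  rw [← norm_iteratedFDeriv_one, norm_iteratedFDeriv_fderiv]
  exact hb z

theorem norm_sub_sub_two_smul_fderiv_le (hf : Differentiable ℝ f)
    (hlip : ∀ x y, ‖fderiv ℝ f x - fderiv ℝ f y‖ ≤ b * ‖x - y‖) (x v : E) :
    ‖f (x + v) - f (x - v) - (2 : ℝ) • fderiv ℝ f x v‖ ≤ b * ‖v‖ ^ 2 := by
  set g : ℝ → G := fun t => f (x + t • v) - f (x - t • v) - (2 * t) • fderiv ℝ f x v
  set g' : ℝ → G := fun t =>
    (fderiv ℝ f (x + t • v) - fderiv ℝ f x) v + (fderiv ℝ f (x - t • v) - fderiv ℝ f x) v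
  have hg : ∀ t, HasDerivAt g (g' t) t := by
    intro t
    have hplus := (hf _).hasFDerivAt.comp_hasDerivAt t
      (((hasDerivAt_id t).smul_const v).const_add x)
    have hminus := (hf _).hasFDerivAt.comp_hasDerivAt t
      (((hasDerivAt_id t).smul_const v).const_sub x)
    have hlin := ((hasDerivAt_id t).const_mul 2).smul_const (fderiv ℝ f x v)
    refine ((hplus.sub hminus).sub hlin).congr_deriv ?_
    simp only [g', one_smul, id, mul_one, sub_apply, map_neg]
    module
  have hg' : ∀ t ∈ Ico (0 : ℝ) 1, ‖g' t‖ ≤ 2 * b * t * ‖v‖ ^ 2 := by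
    intro t ht
    have hside : ∀ w, ‖w‖ = t * ‖v‖ →
        ‖(fderiv ℝ f (x + w) - fderiv ℝ f x) v‖ ≤ b * t * ‖v‖ ^ 2 := by
      intro w hw
      calc _ ≤ ‖fderiv ℝ f (x + w) - fderiv ℝ f x‖ * ‖v‖ := ContinuousLinearMap.le_opNorm _ _
        _ ≤ b * ‖w‖ * ‖v‖ := by
          gcongr
          simpa using hlip (x + w) x
        _ = b * t * ‖v‖ ^ 2 := by rw [hw]; ring
    have hnorm : ‖t • v‖ = t * ‖v‖ := by rw [norm_smul, Real.norm_of_nonneg ht.1]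
    calc ‖g' t‖ ≤ b * t * ‖v‖ ^ 2 + b * t * ‖v‖ ^ 2 := by
          refine (norm_add_le _ _).trans (add_le_add (hside _ hnorm) ?_)
          simpa [sub_eq_add_neg] using hside (-(t • v)) (by rw [norm_neg, hnorm])
      _ = 2 * b * t * ‖v‖ ^ 2 := by ring
  have hB : ∀ t, HasDerivAt (fun t => b * t ^ 2 * ‖v‖ ^ 2) (2 * b * t * ‖v‖ ^ 2) t := by
    intro t
    refine (((hasDerivAt_pow 2 t).const_mul b).mul_const (‖v‖ ^ 2)).congr_deriv ?_
    simp only [Nat.cast_ofNat, Nat.add_one_sub_one, pow_one]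
    ring
  have := image_norm_le_of_norm_deriv_right_le_deriv_boundary
    (fun t _ => (hg t).continuousAt.continuousWithinAt) (fun t _ => (hg t).hasDerivWithinAt)
    (by simp [g]) hB hg' (right_mem_Icc.2 zero_le_one)
  simpa [g] using this

theorem abs_sub_sub_two_mul_inner_gradient_le {H : Type u} [NormedAddCommGroup H]
    [InnerProductSpace ℝ H] [CompleteSpace H] {F : H → ℝ} (hF : ContDiff ℝ 2 F)
    (hb : ∀ x, ‖iteratedFDeriv ℝ 2 F x‖ ≤ b) (x v : H) :
    |F (x + v) - F (x - v) - 2 * ⟪gradient F x, v⟫| ≤ b * ‖v‖ ^ 2 := by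
  have hcd := norm_sub_sub_two_smul_fderiv_le (hF.differentiable two_ne_zero)
    (norm_fderiv_sub_le_of_norm_iteratedFDeriv_two_le hF hb) x v
  rwa [← toDual_gradient, InnerProductSpace.toDual_apply_apply, smul_eq_mul] at hcd

end CentralDifference

section SecondMoment

variable {ι : Type u} {Ω : Type v} [Fintype ι] [MeasurableSpace Ω] {μ : Measure Ω}
  {Φ : Ω → EuclideanSpace ℝ ι}

theorem MeasureTheory.MemLp.integrable_apply_mul_apply (hΦ : MemLp Φ 2 μ) (j l : ι) :
    Integrable (fun ω => Φ ω j * Φ ω l) μ := by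
  have hcoord : ∀ i, MemLp (fun ω => Φ ω i) 2 μ :=
    fun i => (EuclideanSpace.proj (𝕜 := ℝ) i).comp_memLp' hΦ
  exact (hcoord j).integrable_mul (hcoord l)

theorem MeasureTheory.MemLp.integrable_inner_smul (hΦ : MemLp Φ 2 μ) (w : EuclideanSpace ℝ ι) :
    Integrable (fun ω => ⟪w, Φ ω⟫ • Φ ω) μ :=
  memLp_one_iff_integrable.1 (hΦ.smul ((innerSL ℝ w).comp_memLp' hΦ))

theorem integral_inner_smul_eq_smul {c : ℝ} (hΦ : MemLp Φ 2 μ)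
    (hcov : ∀ j l, j ≠ l → ∫ ω, Φ ω j * Φ ω l ∂μ = 0) (hvar : ∀ j, ∫ ω, Φ ω j ^ 2 ∂μ = c)
    (w : EuclideanSpace ℝ ι) :
    ∫ ω, ⟪w, Φ ω⟫ • Φ ω ∂μ = c • w := by
  ext j
  have hcoord : (∫ ω, ⟪w, Φ ω⟫ • Φ ω ∂μ) j = ∑ l, w l * ∫ ω, Φ ω l * Φ ω j ∂μ := by
    change EuclideanSpace.proj (𝕜 := ℝ) j _ = _
    simp_rw [← integral_const_mul]
    rw [← (EuclideanSpace.proj (𝕜 := ℝ) j).integral_comp_comm (hΦ.integrable_inner_smul w),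
      ← integral_finsetSum _ fun l _ => (hΦ.integrable_apply_mul_apply l j).const_mul (w l)]
    congr with ω
    simp only [EuclideanSpace.proj, PiLp.proj_apply, PiLp.smul_apply, smul_eq_mul, PiLp.inner_apply,
      RCLike.inner_apply, conj_trivial, Finset.sum_mul]
    exact Finset.sum_congr rfl fun l _ => by ring
  rw [hcoord, Finset.sum_eq_single j (fun l _ hlj => by rw [hcov l j hlj, mul_zero])
    (fun h => absurd (Finset.mem_univ j) h)]
  simp [← sq, hvar, mul_comm]

theorem zero_order_bias_bound_general
    {d : ℕ} {Ω : Type*} [MeasurableSpace Ω] (μ : Measure Ω) [IsProbabilityMeasure μ]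
    (F : EuclideanSpace ℝ (Fin d) → ℝ) (b b₁ b₂ : ℝ)
    (hF : ContDiff ℝ 2 F)
    (hb : ∀ θ : EuclideanSpace ℝ (Fin d), ‖iteratedFDeriv ℝ 2 F θ‖ ≤ b)
    (Φ : Ω → EuclideanSpace ℝ (Fin d)) (hΦmeas : Measurable Φ)
    (hΦcov : ∀ j l : Fin d, j ≠ l → ∫ ω, Φ ω j * Φ ω l ∂μ = 0)
    (hΦvar : ∀ j : Fin d, ∫ ω, (Φ ω j) ^ 2 ∂μ = b₁)
    (hΦbdd : ∀ᵐ ω ∂μ, ‖Φ ω‖ ≤ b₂)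
    (θ : EuclideanSpace ℝ (Fin d)) (γ : ℝ) :
    ‖(∫ ω, (F (θ + γ • Φ ω) - F (θ - γ • Φ ω)) • Φ ω ∂μ) -
        (2 * b₁ * γ) • gradient F θ‖ ≤ b * b₂ ^ 3 * γ ^ 2 := by
  have hb0 : 0 ≤ b := (norm_nonneg _).trans (hb θ)
  have hΦ2 : MemLp Φ 2 μ :=
    (memLp_top_of_bound hΦmeas.aestronglyMeasurable b₂ hΦbdd).mono_exponent le_top
  set R : Ω → EuclideanSpace ℝ (Fin d) := fun ω =>
    (F (θ + γ • Φ ω) - F (θ - γ • Φ ω) - 2 * γ * ⟪gradient F θ, Φ ω⟫) • Φ ω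
  have hR : ∀ᵐ ω ∂μ, ‖R ω‖ ≤ b * b₂ ^ 3 * γ ^ 2 := by
    filter_upwards [hΦbdd] with ω hω
    have hcd := abs_sub_sub_two_mul_inner_gradient_le hF hb θ (γ • Φ ω)
    rw [inner_smul_right, ← mul_assoc] at hcd
    calc ‖R ω‖ ≤ b * ‖γ • Φ ω‖ ^ 2 * ‖Φ ω‖ := by rw [norm_smul, Real.norm_eq_abs]; gcongr
      _ = b * γ ^ 2 * ‖Φ ω‖ ^ 3 := by rw [norm_smul, Real.norm_eq_abs, mul_pow, sq_abs]; ring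
      _ ≤ b * γ ^ 2 * b₂ ^ 3 := by gcongr
      _ = b * b₂ ^ 3 * γ ^ 2 := by ring
  have hRint : Integrable R μ := Integrable.of_bound (by fun_prop) _ hR
  have hsplit : ∫ ω, (F (θ + γ • Φ ω) - F (θ - γ • Φ ω)) • Φ ω ∂μ =
      ∫ ω, R ω ∂μ + (2 * γ) • ∫ ω, ⟪gradient F θ, Φ ω⟫ • Φ ω ∂μ := by
    rw [← integral_smul, ← integral_add hRint]
    · refine integral_congr_ae (.of_forall fun ω => ?_)
      simp only [R]
      module
    · exact (hΦ2.integrable_inner_smul _).smul (2 * γ)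
  rw [hsplit, integral_inner_smul_eq_smul hΦ2 hΦcov hΦvar, smul_smul, mul_right_comm,
    add_sub_cancel_right]
  simpa using norm_integral_le_of_norm_le_const hR

/-- Bias bound of the two-point zero-order gradient estimator: if `F` is `C²` with Hessian
norm bounded by `b`, and `Φ` is a random vector satisfying the perturbation assumption with
constants `b₁, b₂ > 0`, then
`‖E[Φ (F(θ + γΦ) − F(θ − γΦ))] − 2 b₁ γ ∇F(θ)‖ ≤ b b₂³ γ²`. -/
theorem zero_order_bias_bound
    {d : ℕ} {Ω : Type*} [MeasurableSpace Ω] (μ : Measure Ω) [IsProbabilityMeasure μ]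
    (F : EuclideanSpace ℝ (Fin d) → ℝ) (b b₁ b₂ : ℝ) (hb₁ : 0 < b₁) (hb₂ : 0 < b₂)
    (hF : ContDiff ℝ 2 F)
    (hb : ∀ θ : EuclideanSpace ℝ (Fin d), ‖iteratedFDeriv ℝ 2 F θ‖ ≤ b)
    (Φ : Ω → EuclideanSpace ℝ (Fin d)) (hΦmeas : Measurable Φ)
    (hΦcov : ∀ j l : Fin d, j ≠ l → ∫ ω, Φ ω j * Φ ω l ∂μ = 0)
    (hΦvar : ∀ j : Fin d, ∫ ω, (Φ ω j) ^ 2 ∂μ = b₁)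
    (hΦbdd : ∀ᵐ ω ∂μ, ‖Φ ω‖ ≤ b₂)
    (θ : EuclideanSpace ℝ (Fin d)) (γ : ℝ) (hγ : 0 < γ) :
    ‖(∫ ω, (F (θ + γ • Φ ω) - F (θ - γ • Φ ω)) • Φ ω ∂μ) -
        (2 * b₁ * γ) • gradient F θ‖ ≤ b * b₂ ^ 3 * γ ^ 2 :=
  zero_order_bias_bound_general μ F b b₁ b₂ hF hb Φ hΦmeas hΦcov hΦvar hΦbdd θ γ
end SecondMoment
end

section
/- Let N₁ and N₂ be disjoint finite index sets, and let h_i (i ∈ N₁ ∪ N₂), n₁, n₂, n₃ be mutually independent real random variables with mean zero and finite second moments, independent of the square-integrable real random variables (X_i)_{i ∈ N₁ ∪ N₂}. Then for any real constants (a_i), E[(∑_{i∈N₁} a_i h_i + n₁)(∑_{i∈N₁} h_i X_i + ∑_{j∈N₂} a_j h_j + n₂) + (∑_{j∈N₂} h_j X_j + n₃)(∑_{i∈N₁} h_i X_i + ∑_{j∈N₂} a_j h_j + n₂)] = ∑_{i∈N₁∪N₂} a_i E[h_i²] E[X_i]. -/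
/-!
Both slot products are bilinear in the vector `Z = (h_i, n₁, n₂, n₃)` of channels and noises,
with coefficients that are functions of the data `X`: the sum of the two products is
`(∑_{N₁} aᵢhᵢ + ∑_{N₂} hⱼXⱼ + n₁ + n₃) · (∑_{N₁} hᵢXᵢ + ∑_{N₂} aⱼhⱼ + n₂)`.
Since `Z` is independent of `X`, each term `E[Z_s Z_t c(X)]` factors as `E[Z_s Z_t] E[c(X)]`,
and the off-diagonal moments `E[Z_s Z_t]` vanish because the components of `Z` are independent
and centred. On the diagonal the coefficient of `hᵢ²` is `aᵢXᵢ`, whatever the slot of device `i`,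
and every noise appears in only one of the two factors.
-/

open MeasureTheory ProbabilityTheory

section Bilinear

variable {Ω β S : Type*} [MeasurableSpace Ω] [MeasurableSpace β] {μ : Measure Ω}

theorem ProbabilityTheory.iIndepFun.integral_mul_eq_zero {Z : S → Ω → ℝ} (hZ : iIndepFun Z μ)
    (hint : ∀ s, Integrable (Z s) μ) (hmean : ∀ s, ∫ ω, Z s ω ∂μ = 0) :
    Pairwise fun s t => ∫ ω, Z s ω * Z t ω ∂μ = 0 := fun s t hst => by
  dsimp only
  rw [(hZ.indepFun hst).integral_fun_mul_eq_mul_integral (hint s).aestronglyMeasurable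
    (hint t).aestronglyMeasurable, hmean s, zero_mul]

theorem integral_sum_mul_sum_of_indepFun [Fintype S] {Z : S → Ω → ℝ} {Y : Ω → β}
    {f g : S → β → ℝ} (hZ : ∀ s, MemLp (Z s) 2 μ)
    (huncorr : Pairwise fun s t => ∫ ω, Z s ω * Z t ω ∂μ = 0)
    (hZY : IndepFun (fun ω s => Z s ω) Y μ) (hf : ∀ s, Measurable (f s))
    (hg : ∀ s, Measurable (g s)) (hfg : ∀ s t, Integrable (fun ω => f s (Y ω) * g t (Y ω)) μ) :
    ∫ ω, (∑ s, Z s ω * f s (Y ω)) * (∑ t, Z t ω * g t (Y ω)) ∂μ =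
      ∑ s, (∫ ω, Z s ω ^ 2 ∂μ) * ∫ ω, f s (Y ω) * g s (Y ω) ∂μ := by
  have hindep : ∀ s t, IndepFun (fun ω => Z s ω * Z t ω) (fun ω => f s (Y ω) * g t (Y ω)) μ :=
    fun s t => hZY.comp ((measurable_pi_apply s).mul (measurable_pi_apply t))
      ((hf s).mul (hg t))
  have hZZ : ∀ s t, Integrable (fun ω => Z s ω * Z t ω) μ := fun s t =>
    (hZ s).integrable_mul (hZ t)
  have hterm : ∀ s t, Integrable (fun ω => Z s ω * Z t ω * (f s (Y ω) * g t (Y ω))) μ :=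
    fun s t => (hindep s t).integrable_mul (hZZ s t) (hfg s t)
  calc ∫ ω, (∑ s, Z s ω * f s (Y ω)) * (∑ t, Z t ω * g t (Y ω)) ∂μ
      = ∫ ω, ∑ s, ∑ t, Z s ω * Z t ω * (f s (Y ω) * g t (Y ω)) ∂μ := by
        congr 1 with ω
        rw [Finset.sum_mul_sum]
        exact Finset.sum_congr rfl fun s _ => Finset.sum_congr rfl fun t _ => by ring
    _ = ∑ s, ∑ t, (∫ ω, Z s ω * Z t ω ∂μ) * ∫ ω, f s (Y ω) * g t (Y ω) ∂μ := by
        rw [integral_finsetSum _ fun s _ => integrable_finsetSum _ fun t _ => hterm s t]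
        refine Finset.sum_congr rfl fun s _ => ?_
        rw [integral_finsetSum _ fun t _ => hterm s t]
        exact Finset.sum_congr rfl fun t _ => (hindep s t).integral_fun_mul_eq_mul_integral
          (hZZ s t).aestronglyMeasurable (hfg s t).aestronglyMeasurable
    _ = ∑ s, (∫ ω, Z s ω ^ 2 ∂μ) * ∫ ω, f s (Y ω) * g s (Y ω) ∂μ := by
        refine Finset.sum_congr rfl fun s _ => ?_
        rw [Finset.sum_eq_single s (fun t _ hts => by rw [huncorr hts.symm, zero_mul])
          (by simp)]
        simp only [sq]

end Bilinear

theorem ProbabilityTheory.IndepFun.sumElim_fin_three {Ω K γ : Type*} [MeasurableSpace Ω]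
    [MeasurableSpace γ] {μ : Measure Ω} {V : K → Ω → ℝ} {n₁ n₂ n₃ : Ω → ℝ} {Y : Ω → γ}
    (hVY : IndepFun (fun ω => ((fun i => V i ω), n₁ ω, n₂ ω, n₃ ω)) Y μ) :
    IndepFun (fun ω s => Sum.elim V ![n₁, n₂, n₃] s ω) Y μ := by
  let φ : (K → ℝ) × ℝ × ℝ × ℝ → K ⊕ Fin 3 → ℝ := fun p =>
    Sum.elim p.1 ![p.2.1, p.2.2.1, p.2.2.2]
  have hφ : Measurable φ := by
    refine measurable_pi_lambda _ fun s => ?_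
    rcases s with i | k
    · exact (measurable_pi_apply i).comp measurable_fst
    · fin_cases k <;> dsimp [φ] <;> fun_prop
  have hcomp : (fun ω s => Sum.elim V ![n₁, n₂, n₃] s ω) =
      φ ∘ fun ω => ((fun i => V i ω), n₁ ω, n₂ ω, n₃ ω) := by
    funext ω s
    rcases s with i | k
    · rfl
    · fin_cases k <;> rfl
  rw [hcomp]
  exact hVY.comp hφ measurable_id

theorem Finset.sum_coe_union_ite {ι M : Type*} [DecidableEq ι] [AddCommMonoid M]
    {s t : Finset ι} (hst : Disjoint s t) (u v : ι → M) :
    ∑ i : {j // j ∈ s ∪ t}, (if i.1 ∈ s then u i else v i) = ∑ i ∈ s, u i + ∑ i ∈ t, v i := by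
  rw [Finset.sum_coe_sort (s ∪ t) fun i => if i ∈ s then u i else v i, Finset.sum_union hst]
  congr 1
  · exact Finset.sum_congr rfl fun i hi => if_pos hi
  · exact Finset.sum_congr rfl fun i hi => if_neg (Finset.disjoint_right.mp hst hi)

section Coefficients

variable {ι : Type*} [DecidableEq ι] (N₁ N₂ : Finset ι) (a : ι → ℝ)

/-- Coefficients, as functions of the data, of the channels `hᵢ` and the noises `n₁, n₂, n₃` in
the factor `∑_{N₁} aᵢhᵢ + ∑_{N₂} hⱼXⱼ + n₁ + n₃` collecting the pilots of slot 1 and the data of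
slot 3. -/
def leftCoeff : {j // j ∈ N₁ ∪ N₂} ⊕ Fin 3 → ({j // j ∈ N₁ ∪ N₂} → ℝ) → ℝ :=
  Sum.elim (fun i x => if i.1 ∈ N₁ then a i else x i) fun k _ => ![1, 0, 1] k

/-- The same for the slot-2 signal `∑_{N₁} hᵢXᵢ + ∑_{N₂} aⱼhⱼ + n₂`. -/
def rightCoeff : {j // j ∈ N₁ ∪ N₂} ⊕ Fin 3 → ({j // j ∈ N₁ ∪ N₂} → ℝ) → ℝ :=
  Sum.elim (fun i x => if i.1 ∈ N₁ then x i else a i) fun k _ => ![0, 1, 0] k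

variable {N₁ N₂}

theorem measurable_leftCoeff (s : {j // j ∈ N₁ ∪ N₂} ⊕ Fin 3) :
    Measurable (leftCoeff N₁ N₂ a s) := by
  rcases s with i | k
  · by_cases hi : i.1 ∈ N₁ <;> simp only [leftCoeff, Sum.elim_inl, hi, ↓reduceIte] <;> fun_prop
  · exact measurable_const

theorem measurable_rightCoeff (s : {j // j ∈ N₁ ∪ N₂} ⊕ Fin 3) :
    Measurable (rightCoeff N₁ N₂ a s) := by
  rcases s with i | k
  · by_cases hi : i.1 ∈ N₁ <;> simp only [rightCoeff, Sum.elim_inl, hi, ↓reduceIte] <;> fun_prop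
  · exact measurable_const

section MemLp

variable {Ω : Type*} [MeasurableSpace Ω] {μ : Measure Ω} [IsFiniteMeasure μ]
  {Y : Ω → {j // j ∈ N₁ ∪ N₂} → ℝ} (hY : ∀ i, MemLp (fun ω => Y ω i) 2 μ)
include hY

theorem memLp_leftCoeff_comp (s : {j // j ∈ N₁ ∪ N₂} ⊕ Fin 3) :
    MemLp (fun ω => leftCoeff N₁ N₂ a s (Y ω)) 2 μ := by
  rcases s with i | k
  · by_cases hi : i.1 ∈ N₁ <;> simp [leftCoeff, hi, hY i, memLp_const]
  · exact memLp_const _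

theorem memLp_rightCoeff_comp (s : {j // j ∈ N₁ ∪ N₂} ⊕ Fin 3) :
    MemLp (fun ω => rightCoeff N₁ N₂ a s (Y ω)) 2 μ := by
  rcases s with i | k
  · by_cases hi : i.1 ∈ N₁ <;> simp [rightCoeff, hi, hY i, memLp_const]
  · exact memLp_const _

end MemLp

theorem leftCoeff_mul_rightCoeff (s : {j // j ∈ N₁ ∪ N₂} ⊕ Fin 3)
    (x : {j // j ∈ N₁ ∪ N₂} → ℝ) :
    leftCoeff N₁ N₂ a s x * rightCoeff N₁ N₂ a s x =
      Sum.elim (fun i : {j // j ∈ N₁ ∪ N₂} => a i * x i) 0 s := by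
  rcases s with i | k
  · by_cases hi : i.1 ∈ N₁ <;> simp [leftCoeff, rightCoeff, hi, mul_comm]
  · fin_cases k <;> simp [leftCoeff, rightCoeff]

variable {Ω : Type*} (hdisj : Disjoint N₁ N₂) (h X : ι → Ω → ℝ) (n₁ n₂ n₃ : Ω → ℝ) (ω : Ω)
include hdisj

theorem sum_mul_leftCoeff :
    ∑ s, Sum.elim (fun i : {j // j ∈ N₁ ∪ N₂} => h i.1) ![n₁, n₂, n₃] s ω *
        leftCoeff N₁ N₂ a s (fun i => X i.1 ω) =
      ∑ i ∈ N₁, a i * h i ω + ∑ j ∈ N₂, h j ω * X j ω + n₁ ω + n₃ ω := by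
  simp only [Fintype.sum_sum_type, Sum.elim_inl, Sum.elim_inr, leftCoeff, mul_ite,
    Fin.sum_univ_three]
  rw [Finset.sum_coe_union_ite hdisj (fun i => h i ω * a i) fun i => h i ω * X i ω]
  simp only [mul_comm (h _ ω) (a _), Matrix.cons_val, Matrix.cons_val_zero, Matrix.cons_val_one]
  ring

theorem sum_mul_rightCoeff :
    ∑ s, Sum.elim (fun i : {j // j ∈ N₁ ∪ N₂} => h i.1) ![n₁, n₂, n₃] s ω *
        rightCoeff N₁ N₂ a s (fun i => X i.1 ω) =
      ∑ i ∈ N₁, h i ω * X i ω + ∑ j ∈ N₂, a j * h j ω + n₂ ω := by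
  simp only [Fintype.sum_sum_type, Sum.elim_inl, Sum.elim_inr, rightCoeff, mul_ite,
    Fin.sum_univ_three]
  rw [Finset.sum_coe_union_ite hdisj (fun i => h i ω * X i ω) fun i => h i ω * a i]
  simp only [mul_comm (h _ ω) (a _), Matrix.cons_val, Matrix.cons_val_zero, Matrix.cons_val_one]
  ring

end Coefficients

theorem over_the_air_aggregation_async_general
    {Ω : Type*} [MeasurableSpace Ω] (μ : Measure Ω) [IsProbabilityMeasure μ]
    {ι : Type*} [DecidableEq ι] (N₁ N₂ : Finset ι) (hdisj : Disjoint N₁ N₂)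
    (h : ι → Ω → ℝ) (n1 n2 n3 : Ω → ℝ) (X : ι → Ω → ℝ)
    (hL2 : ∀ i ∈ N₁ ∪ N₂, MemLp (h i) 2 μ)
    (hn1L2 : MemLp n1 2 μ) (hn2L2 : MemLp n2 2 μ) (hn3L2 : MemLp n3 2 μ)
    (hXL2 : ∀ i ∈ N₁ ∪ N₂, MemLp (X i) 2 μ)
    (hmean : ∀ i ∈ N₁ ∪ N₂, ∫ ω, h i ω ∂μ = 0)
    (hn1mean : ∫ ω, n1 ω ∂μ = 0) (hn2mean : ∫ ω, n2 ω ∂μ = 0)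
    (hn3mean : ∫ ω, n3 ω ∂μ = 0)
    (hIndep : iIndepFun
      (Sum.elim (fun i : {j // j ∈ N₁ ∪ N₂} => h i.1) ![n1, n2, n3]) μ)
    (hIndepX : IndepFun
      (fun ω => ((fun i : {j // j ∈ N₁ ∪ N₂} => h i.1 ω), n1 ω, n2 ω, n3 ω))
      (fun ω => fun i : {j // j ∈ N₁ ∪ N₂} => X i.1 ω) μ)
    (a : ι → ℝ) :
    ∫ ω, ((∑ i ∈ N₁, a i * h i ω + n1 ω) *
            (∑ i ∈ N₁, h i ω * X i ω + ∑ j ∈ N₂, a j * h j ω + n2 ω) +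
          (∑ j ∈ N₂, h j ω * X j ω + n3 ω) *
            (∑ i ∈ N₁, h i ω * X i ω + ∑ j ∈ N₂, a j * h j ω + n2 ω)) ∂μ =
      ∑ i ∈ N₁ ∪ N₂, a i * (∫ ω, (h i ω) ^ 2 ∂μ) * (∫ ω, X i ω ∂μ) := by
  have hZ : ∀ s, MemLp (Sum.elim (fun i : {j // j ∈ N₁ ∪ N₂} => h i.1) ![n1, n2, n3] s) 2 μ := by
    rintro (i | k)
    exacts [hL2 i.1 i.2, by fin_cases k <;> assumption]
  have hZmean :
      ∀ s, ∫ ω, Sum.elim (fun i : {j // j ∈ N₁ ∪ N₂} => h i.1) ![n1, n2, n3] s ω ∂μ = 0 := by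
    rintro (i | k)
    exacts [hmean i.1 i.2, by fin_cases k <;> assumption]
  have hX : ∀ i : {j // j ∈ N₁ ∪ N₂}, MemLp (X i) 2 μ := fun i => hXL2 i.1 i.2
  have hmoments := integral_sum_mul_sum_of_indepFun hZ
    (hIndep.integral_mul_eq_zero (fun s => (hZ s).integrable one_le_two) hZmean)
    hIndepX.sumElim_fin_three (measurable_leftCoeff a) (measurable_rightCoeff a)
    fun s t => (memLp_leftCoeff_comp a hX s).integrable_mul (memLp_rightCoeff_comp a hX t)
  refine (integral_congr_ae (.of_forall fun ω => ?_)).trans (hmoments.trans ?_)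
  · rw [sum_mul_leftCoeff a hdisj, sum_mul_rightCoeff a hdisj]
    ring
  · simp only [leftCoeff_mul_rightCoeff, Fintype.sum_sum_type, Sum.elim_inl, Sum.elim_inr,
      Pi.zero_apply, integral_zero, mul_zero, Finset.sum_const_zero, add_zero]
    rw [← Finset.sum_coe_sort (N₁ ∪ N₂)]
    refine Finset.sum_congr rfl fun i _ => ?_
    rw [integral_const_mul]
    ring

/-- Three-slot asynchronous over-the-air aggregation identity: with zero-mean mutually
independent channels `h_i` (`i ∈ N₁ ∪ N₂`, `N₁, N₂` disjoint) and noises `n₁, n₂, n₃`,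
all independent of the square-integrable data `(X_i)`, we have
`E[(∑_{N₁} aᵢhᵢ + n₁)(∑_{N₁} hᵢXᵢ + ∑_{N₂} aⱼhⱼ + n₂)
  + (∑_{N₂} hⱼXⱼ + n₃)(∑_{N₁} hᵢXᵢ + ∑_{N₂} aⱼhⱼ + n₂)] = ∑_{N₁∪N₂} aᵢ E[hᵢ²] E[Xᵢ]`. -/
theorem over_the_air_aggregation_async
    {Ω : Type*} [MeasurableSpace Ω] (μ : Measure Ω) [IsProbabilityMeasure μ]
    {ι : Type*} [DecidableEq ι] (N₁ N₂ : Finset ι) (hdisj : Disjoint N₁ N₂)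
    (h : ι → Ω → ℝ) (n1 n2 n3 : Ω → ℝ) (X : ι → Ω → ℝ)
    (hmeas : ∀ i ∈ N₁ ∪ N₂, Measurable (h i))
    (hn1 : Measurable n1) (hn2 : Measurable n2) (hn3 : Measurable n3)
    (hXmeas : ∀ i ∈ N₁ ∪ N₂, Measurable (X i))
    (hL2 : ∀ i ∈ N₁ ∪ N₂, MemLp (h i) 2 μ)
    (hn1L2 : MemLp n1 2 μ) (hn2L2 : MemLp n2 2 μ) (hn3L2 : MemLp n3 2 μ)
    (hXL2 : ∀ i ∈ N₁ ∪ N₂, MemLp (X i) 2 μ)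
    (hmean : ∀ i ∈ N₁ ∪ N₂, ∫ ω, h i ω ∂μ = 0)
    (hn1mean : ∫ ω, n1 ω ∂μ = 0) (hn2mean : ∫ ω, n2 ω ∂μ = 0)
    (hn3mean : ∫ ω, n3 ω ∂μ = 0)
    (hIndep : iIndepFun
      (Sum.elim (fun i : {j // j ∈ N₁ ∪ N₂} => h i.1) ![n1, n2, n3]) μ)
    (hIndepX : IndepFun
      (fun ω => ((fun i : {j // j ∈ N₁ ∪ N₂} => h i.1 ω), n1 ω, n2 ω, n3 ω))
      (fun ω => fun i : {j // j ∈ N₁ ∪ N₂} => X i.1 ω) μ)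
    (a : ι → ℝ) :
    ∫ ω, ((∑ i ∈ N₁, a i * h i ω + n1 ω) *
            (∑ i ∈ N₁, h i ω * X i ω + ∑ j ∈ N₂, a j * h j ω + n2 ω) +
          (∑ j ∈ N₂, h j ω * X j ω + n3 ω) *
            (∑ i ∈ N₁, h i ω * X i ω + ∑ j ∈ N₂, a j * h j ω + n2 ω)) ∂μ =
      ∑ i ∈ N₁ ∪ N₂, a i * (∫ ω, (h i ω) ^ 2 ∂μ) * (∫ ω, X i ω ∂μ) :=
  over_the_air_aggregation_async_general μ N₁ N₂ hdisj h n1 n2 n3 X hL2 hn1L2 hn2L2 hn3L2 hXL2 hmean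
    hn1mean hn2mean hn3mean hIndep hIndepX a
end

section
/- Let Φ be a random vector in ℝ^d with ‖Φ‖ ≤ b₂ almost surely, and let X₁, …, X_N be real random variables with |X_i| ≤ 2Lγb₂ almost surely (as holds when X_i = f_i(θ + γΦ, ξ_i) − f_i(θ − γΦ, ξ_i) with each f_i(·, ξ) L-Lipschitz). Let h₁, …, h_N, n₁, n₂ be mutually independent zero-mean real random variables with E[n₁²] = σ₁², E[n₂²] = σ₂², and finite fourth moments for the h_i, such that (h₁, …, h_N, n₁, n₂) is independent of (Φ, X₁, …, X_N). Then for any nonnegative reals a₁, …, a_N, E[‖Φ (∑_i a_i h_i + n₁)(∑_i h_i X_i + n₂)‖²] ≤ b₂² [ σ₁²σ₂² + 4b₂²L²γ²σ₁² ∑_i E[h_i²] + σ₂² ∑_i a_i² E[h_i²] + 4b₂²L²γ² ( ∑_i ∑_j a_i² E[h_i²] E[h_j²] + 2 ∑_i ∑_j a_i a_j E[h_i²] E[h_j²] + ∑_i a_i² E[h_i⁴] ) ]. -/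
/-!
Since `(h, n₁, n₂)` is independent of `(Φ, X)`, the expectation may be computed with `(Φ, X)`
frozen at a value `(φ, x)` with `‖φ‖ ≤ b₂` and `|xᵢ| ≤ c := 2Lγb₂`; it is then
`‖φ‖² E[(U + n₁)² (V + n₂)²]` with `U = ∑ aᵢhᵢ` and `V = ∑ xᵢhᵢ`. The independent centred noises
only add `σ₁² E[V²] + σ₂² E[U²] + σ₁²σ₂²` to `E[U²V²]`. For independent centred `hᵢ`, the moment
`E[hᵢhⱼhₖhₗ]` vanishes unless the indices pair up, which gives
`E[U²V²] = E[U²] E[V²] + 2 (∑ aᵢxᵢE[hᵢ²])² + ∑ aᵢ²xᵢ² (E[hᵢ⁴] - 3 E[hᵢ²]²)`.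
Bounding `xᵢ²` by `c²` in this exact expression gives the constant.
-/

open MeasureTheory ProbabilityTheory

section

variable {Ω : Type*} [MeasurableSpace Ω] {μ : Measure Ω}

theorem integral_comp_le_of_indepFun [IsProbabilityMeasure μ]
    {α β : Type*} [MeasurableSpace α] [MeasurableSpace β] {T : Ω → α} {S : Ω → β}
    (hTS : IndepFun T S μ) (hT : Measurable T) (hS : Measurable S)
    {G : α → β → ℝ} (hG : Measurable (Function.uncurry G)) (hG0 : ∀ t s, 0 ≤ G t s) {K : ℝ}
    (hK : ∀ᵐ ω ∂μ, Integrable (fun ω' => G (T ω') (S ω)) μ ∧ ∫ ω', G (T ω') (S ω) ∂μ ≤ K) :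
    ∫ ω, G (T ω) (S ω) ∂μ ≤ K := by
  have hK0 : 0 ≤ K := by
    obtain ⟨ω, -, hω⟩ := hK.exists
    exact (integral_nonneg fun _ => hG0 _ _).trans hω
  have hiter : ∫⁻ ω, ENNReal.ofReal (G (T ω) (S ω)) ∂μ
      = ∫⁻ ω, ∫⁻ ω', ENNReal.ofReal (G (T ω') (S ω)) ∂μ ∂μ := by
    have hmap := (indepFun_iff_map_prod_eq_prod_map_map hT.aemeasurable hS.aemeasurable).1 hTS
    calc ∫⁻ ω, ENNReal.ofReal (G (T ω) (S ω)) ∂μ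
        = ∫⁻ p, ENNReal.ofReal (Function.uncurry G p) ∂(μ.map fun ω => (T ω, S ω)) :=
          (lintegral_map hG.ennreal_ofReal (hT.prodMk hS)).symm
      _ = ∫⁻ s, ∫⁻ t, ENNReal.ofReal (G t s) ∂(μ.map T) ∂(μ.map S) := by
          rw [hmap, lintegral_prod_symm _ hG.ennreal_ofReal.aemeasurable]; rfl
      _ = ∫⁻ ω, ∫⁻ ω', ENNReal.ofReal (G (T ω') (S ω)) ∂μ ∂μ := by
          rw [lintegral_map _ hS]
          · exact lintegral_congr fun ω =>
              lintegral_map (hG.comp measurable_prodMk_right).ennreal_ofReal hT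
          · exact (hG.ennreal_ofReal.comp measurable_swap).lintegral_prod_right'
  have hle : ∫⁻ ω, ENNReal.ofReal (G (T ω) (S ω)) ∂μ ≤ ENNReal.ofReal K := by
    rw [hiter]
    calc ∫⁻ ω, ∫⁻ ω', ENNReal.ofReal (G (T ω') (S ω)) ∂μ ∂μ
        ≤ ∫⁻ _, ENNReal.ofReal K ∂μ := lintegral_mono_ae <| hK.mono fun ω ⟨hint, hbound⟩ => by
          rw [← ofReal_integral_eq_lintegral_ofReal hint (ae_of_all _ fun _ => hG0 _ _)]
          exact ENNReal.ofReal_le_ofReal hbound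
      _ = ENNReal.ofReal K := by simp
  rw [integral_eq_lintegral_of_nonneg_ae (ae_of_all _ fun _ => hG0 _ _)
    (hG.comp (hT.prodMk hS)).aestronglyMeasurable]
  exact ENNReal.toReal_le_of_le_ofReal hK0 hle

theorem integral_mul_add_sq_of_indepFun [IsFiniteMeasure μ] {W V Z : Ω → ℝ}
    (hind : IndepFun (fun ω => (W ω, V ω)) Z μ) (hW0 : ∀ ω, 0 ≤ W ω) (hW : Integrable W μ)
    (hV : AEStronglyMeasurable V μ) (hWV : Integrable (fun ω => W ω * V ω ^ 2) μ)
    (hZ : MemLp Z 2 μ) (hZ0 : ∫ ω, Z ω ∂μ = 0) :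
    Integrable (fun ω => W ω * (V ω + Z ω) ^ 2) μ ∧
      ∫ ω, W ω * (V ω + Z ω) ^ 2 ∂μ = ∫ ω, W ω * V ω ^ 2 ∂μ + (∫ ω, W ω ∂μ) * ∫ ω, Z ω ^ 2 ∂μ := by
  -- `|W V| ≤ W + W V²` because `|v| ≤ 1 + v²`
  have hWV1 : Integrable (fun ω => W ω * V ω) μ := by
    refine (hW.add hWV).mono' (hW.aestronglyMeasurable.mul hV) (ae_of_all _ fun ω => ?_)
    rw [Real.norm_eq_abs, abs_mul, abs_of_nonneg (hW0 ω)]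
    have : |V ω| ≤ 1 + V ω ^ 2 := by nlinarith [abs_nonneg (V ω), sq_abs (V ω)]
    simpa [mul_add] using mul_le_mul_of_nonneg_left this (hW0 ω)
  have hind₁ : IndepFun (fun ω => W ω * V ω) Z μ :=
    hind.comp (φ := fun p : ℝ × ℝ => p.1 * p.2) (ψ := id) (by fun_prop) measurable_id
  have hind₂ : IndepFun W (fun ω => Z ω ^ 2) μ :=
    hind.comp (φ := Prod.fst) (ψ := fun z : ℝ => z ^ 2) measurable_fst (by fun_prop)
  have hcross : Integrable (fun ω => W ω * V ω * Z ω) μ :=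
    hind₁.integrable_mul hWV1 (hZ.integrable one_le_two)
  have hnoise : Integrable (fun ω => W ω * Z ω ^ 2) μ := hind₂.integrable_mul hW hZ.integrable_sq
  have hexpand : (fun ω => W ω * (V ω + Z ω) ^ 2)
      = fun ω => W ω * V ω ^ 2 + 2 * (W ω * V ω * Z ω) + W ω * Z ω ^ 2 := by
    ext ω; ring
  have hsignal : Integrable (fun ω => W ω * V ω ^ 2 + 2 * (W ω * V ω * Z ω)) μ :=
    hWV.add (hcross.const_mul 2)
  refine ⟨hexpand ▸ hsignal.add hnoise, ?_⟩
  rw [hexpand, integral_add hsignal hnoise,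
    integral_add hWV (hcross.const_mul 2), integral_const_mul,
    hind₁.integral_fun_mul_eq_mul_integral hWV1.aestronglyMeasurable hZ.aestronglyMeasurable,
    hind₂.integral_fun_mul_eq_mul_integral hW.aestronglyMeasurable
      hZ.integrable_sq.aestronglyMeasurable,
    hZ0]
  ring

theorem MeasureTheory.MemLp.integrable_mul_mul_mul {f₁ f₂ f₃ f₄ : Ω → ℝ} (h₁ : MemLp f₁ 4 μ)
    (h₂ : MemLp f₂ 4 μ) (h₃ : MemLp f₃ 4 μ) (h₄ : MemLp f₄ 4 μ) :
    Integrable (fun ω => f₁ ω * f₂ ω * f₃ ω * f₄ ω) μ := by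
  have : ENNReal.HolderTriple 4 4 2 := ⟨by
    rw [show (4 : ENNReal) = 2 * 2 by norm_num, ENNReal.mul_inv (by simp) (by simp), ← two_mul,
      ← mul_assoc, ENNReal.mul_inv_cancel (by simp) (by simp), one_mul]⟩
  refine ((h₂.mul (r := 2) h₁).integrable_mul (h₄.mul (r := 2) h₃)).congr (ae_of_all _ fun ω => ?_)
  simp only [Pi.mul_apply]
  ring

variable {ι : Type*}

namespace ProbabilityTheory.iIndepFun

variable {g : ι → Ω → ℝ} (hg : iIndepFun g μ) (hmeas : ∀ i, Measurable (g i))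
  (hmean : ∀ i, ∫ ω, g i ω ∂μ = 0)
include hg hmeas hmean

theorem integral_mul_eq [DecidableEq ι] (i j : ι) :
    ∫ ω, g i ω * g j ω ∂μ = if i = j then ∫ ω, g i ω ^ 2 ∂μ else 0 := by
  split_ifs with hij
  · subst hij; simp_rw [sq]
  · rw [(hg.indepFun hij).integral_fun_mul_eq_mul_integral (hmeas i).aestronglyMeasurable
      (hmeas j).aestronglyMeasurable, hmean, zero_mul]

omit hmean in
theorem integral_sq_mul_sq {i k : ι} (hik : i ≠ k) :
    ∫ ω, g i ω ^ 2 * g k ω ^ 2 ∂μ = (∫ ω, g i ω ^ 2 ∂μ) * ∫ ω, g k ω ^ 2 ∂μ :=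
  ((hg.indepFun hik).comp (measurable_id.pow_const 2) (measurable_id.pow_const 2)
    ).integral_fun_mul_eq_mul_integral ((hmeas i).pow_const 2).aestronglyMeasurable
      ((hmeas k).pow_const 2).aestronglyMeasurable

theorem integral_mul_mul_mul_eq_zero {i j k l : ι} (hij : i ≠ j) (hik : i ≠ k) (hil : i ≠ l) :
    ∫ ω, g i ω * g j ω * g k ω * g l ω ∂μ = 0 := by
  classical
  have hdisj : Disjoint ({i} : Finset ι) {j, k, l} := by simp [hij, hik, hil]
  have hind : IndepFun (g i) (fun ω => g j ω * g k ω * g l ω) μ :=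
    (hg.indepFun_finset _ _ hdisj hmeas).comp
    (φ := fun v : ({i} : Finset ι) → ℝ => v ⟨i, Finset.mem_singleton_self i⟩)
    (ψ := fun v : ({j, k, l} : Finset ι) → ℝ => v ⟨j, by simp⟩ * v ⟨k, by simp⟩ * v ⟨l, by simp⟩)
    (measurable_pi_apply _) (by fun_prop)
  calc ∫ ω, g i ω * g j ω * g k ω * g l ω ∂μ = ∫ ω, g i ω * (g j ω * g k ω * g l ω) ∂μ := by
        simp_rw [mul_assoc]
    _ = 0 := by
        rw [hind.integral_fun_mul_eq_mul_integral (hmeas i).aestronglyMeasurable (by fun_prop)]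
        simp [hmean]

/-- The three pairings of `i, j, k, l`; on the diagonal they coincide, and the last term replaces
their `3 E[gᵢ²]²` by `E[gᵢ⁴]`. -/
theorem integral_mul_mul_mul_eq [DecidableEq ι] (i j k l : ι) :
    ∫ ω, g i ω * g j ω * g k ω * g l ω ∂μ =
      (if i = j ∧ k = l then (∫ ω, g i ω ^ 2 ∂μ) * ∫ ω, g k ω ^ 2 ∂μ else 0)
      + (if i = k ∧ j = l then (∫ ω, g i ω ^ 2 ∂μ) * ∫ ω, g j ω ^ 2 ∂μ else 0)
      + (if i = l ∧ j = k then (∫ ω, g i ω ^ 2 ∂μ) * ∫ ω, g j ω ^ 2 ∂μ else 0)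
      + (if i = j ∧ j = k ∧ k = l then ∫ ω, g i ω ^ 4 ∂μ - 3 * (∫ ω, g i ω ^ 2 ∂μ) ^ 2 else 0) := by
  have hpair : ∀ {i k : ι}, i ≠ k → ∫ ω, g i ω * g i ω * g k ω * g k ω ∂μ
      = (∫ ω, g i ω ^ 2 ∂μ) * ∫ ω, g k ω ^ 2 ∂μ := fun hik => by
    rw [← integral_sq_mul_sq hg hmeas hik]; congr 1; ext; ring
  by_cases hij : i = j
  · subst hij
    by_cases hik : i = k
    · subst hik
      by_cases hil : i = l
      · subst hil
        simp only [and_self, if_true]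
        rw [show (fun ω => g i ω * g i ω * g i ω * g i ω) = fun ω => g i ω ^ 4 by ext; ring]
        ring
      · simp only [hil, and_false, false_and, if_false, add_zero]
        refine (integral_congr_ae (ae_of_all _ fun ω => ?_)).trans
          (integral_mul_mul_mul_eq_zero hg hmeas hmean (Ne.symm hil) (Ne.symm hil) (Ne.symm hil))
        ring
    · by_cases hkl : k = l
      · subst hkl
        simp [hik, hpair hik]
      · simp only [hik, hkl, and_false, false_and, if_false, add_zero]
        refine (integral_congr_ae (ae_of_all _ fun ω => ?_)).trans
          (integral_mul_mul_mul_eq_zero hg hmeas hmean (Ne.symm hik) (Ne.symm hik) hkl)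
        ring
  · by_cases hik : i = k
    · subst hik
      by_cases hjl : j = l
      · subst hjl
        simp only [hij, false_and, and_self, if_false, if_true, zero_add, add_zero]
        refine (integral_congr_ae (ae_of_all _ fun ω => ?_)).trans (hpair hij)
        ring
      · simp only [hij, Ne.symm hij, hjl, and_false, false_and, if_false, add_zero]
        refine (integral_congr_ae (ae_of_all _ fun ω => ?_)).trans
          (integral_mul_mul_mul_eq_zero hg hmeas hmean (Ne.symm hij) (Ne.symm hij) hjl)
        ring
    · by_cases hil : i = l
      · subst hil
        by_cases hjk : j = k
        · subst hjk
          simp only [hij, false_and, and_self, if_false, if_true, zero_add, add_zero]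
          refine (integral_congr_ae (ae_of_all _ fun ω => ?_)).trans (hpair hij)
          ring
        · simp only [hij, hik, hjk, and_false, false_and, if_false, add_zero]
          refine (integral_congr_ae (ae_of_all _ fun ω => ?_)).trans
            (integral_mul_mul_mul_eq_zero hg hmeas hmean (Ne.symm hij) hjk (Ne.symm hij))
          ring
      · simp only [hij, hik, hil, false_and, if_false, add_zero]
        exact integral_mul_mul_mul_eq_zero hg hmeas hmean hij hik hil


variable [Fintype ι]

theorem integral_sq_sum (hL2 : ∀ i, MemLp (g i) 2 μ) (a : ι → ℝ) :
    ∫ ω, (∑ i, a i * g i ω) ^ 2 ∂μ = ∑ i, a i ^ 2 * ∫ ω, g i ω ^ 2 ∂μ := by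
  classical
  have hint : ∀ i j, Integrable (fun ω => a i * a j * (g i ω * g j ω)) μ := fun i j =>
    ((hL2 i).integrable_mul (hL2 j)).const_mul _
  have hexp : ∀ ω, (∑ i, a i * g i ω) ^ 2 = ∑ i, ∑ j, a i * a j * (g i ω * g j ω) := fun ω => by
    simp only [sq, Finset.sum_mul_sum, mul_mul_mul_comm]
  simp_rw [hexp]
  rw [integral_finsetSum _ fun i _ => integrable_finsetSum _ fun j _ => hint i j]
  simp_rw [integral_finsetSum _ fun j _ => hint _ j, integral_const_mul,
    integral_mul_eq hg hmeas hmean, mul_ite, mul_zero, Finset.sum_ite_eq, Finset.mem_univ, if_true,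
    sq]

theorem integral_sq_mul_sq_sum (hL4 : ∀ i, MemLp (g i) 4 μ) (a b : ι → ℝ) :
    ∫ ω, (∑ i, a i * g i ω) ^ 2 * (∑ i, b i * g i ω) ^ 2 ∂μ =
      (∑ i, a i ^ 2 * ∫ ω, g i ω ^ 2 ∂μ) * (∑ i, b i ^ 2 * ∫ ω, g i ω ^ 2 ∂μ)
      + 2 * (∑ i, a i * b i * ∫ ω, g i ω ^ 2 ∂μ) ^ 2
      + ∑ i, a i ^ 2 * b i ^ 2 * (∫ ω, g i ω ^ 4 ∂μ - 3 * (∫ ω, g i ω ^ 2 ∂μ) ^ 2) := by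
  classical
  have hint : ∀ i j k l, Integrable
      (fun ω => a i * a j * b k * b l * (g i ω * g j ω * g k ω * g l ω)) μ := fun i j k l =>
    ((hL4 i).integrable_mul_mul_mul (hL4 j) (hL4 k) (hL4 l)).const_mul _
  have hexp : ∀ ω, (∑ i, a i * g i ω) ^ 2 * (∑ i, b i * g i ω) ^ 2 = ∑ l, ∑ k, ∑ j, ∑ i,
      a i * a j * b k * b l * (g i ω * g j ω * g k ω * g l ω) := fun ω => by
    simp only [sq, Finset.sum_mul, Finset.mul_sum]
    refine Finset.sum_congr rfl fun l _ => Finset.sum_congr rfl fun k _ =>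
      Finset.sum_congr rfl fun j _ => Finset.sum_congr rfl fun i _ => by ring
  simp_rw [hexp]
  rw [integral_finsetSum _ fun l _ => integrable_finsetSum _ fun k _ =>
    integrable_finsetSum _ fun j _ => integrable_finsetSum _ fun i _ => hint i j k l]
  simp_rw [integral_finsetSum _ fun _ _ => integrable_finsetSum _ fun _ _ =>
      integrable_finsetSum _ fun _ _ => hint _ _ _ _,
    integral_finsetSum _ fun _ _ => integrable_finsetSum _ fun _ _ => hint _ _ _ _,
    integral_finsetSum _ fun _ _ => hint _ _ _ _, integral_const_mul,
    integral_mul_mul_mul_eq hg hmeas hmean]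
  simp only [mul_add, Finset.sum_add_distrib, ite_and, mul_ite, mul_zero, Finset.sum_ite_eq',
    Finset.mem_univ, if_true, Finset.sum_ite_irrel, Finset.sum_const_zero]
  rw [Finset.sum_comm (γ := ι) (f := fun k i => a i * a i * b k * b k * _), Finset.sum_mul_sum, sq,
    Finset.sum_mul_sum]
  rw [two_mul, ← add_assoc]
  refine congrArg₂ (· + ·) (congrArg₂ (· + ·) (congrArg₂ (· + ·) ?_ ?_) ?_) ?_
  all_goals refine Finset.sum_congr rfl fun _ _ => ?_
  all_goals first | exact Finset.sum_congr rfl fun _ _ => by ring | ring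

end ProbabilityTheory.iIndepFun

theorem integral_sq_sum_add_mul_sum_add [Fintype ι] {h : ι → Ω → ℝ} {n₁ n₂ : Ω → ℝ}
    (hIndep : iIndepFun (Sum.elim h ![n₁, n₂]) μ) (hmeas : ∀ i, Measurable (h i))
    (hn₁ : Measurable n₁) (hn₂ : Measurable n₂) (hL4 : ∀ i, MemLp (h i) 4 μ)
    (hn₁L2 : MemLp n₁ 2 μ) (hn₂L2 : MemLp n₂ 2 μ) (hmean : ∀ i, ∫ ω, h i ω ∂μ = 0)
    (hn₁mean : ∫ ω, n₁ ω ∂μ = 0) (hn₂mean : ∫ ω, n₂ ω ∂μ = 0) (a x : ι → ℝ) :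
    Integrable (fun ω => ((∑ i, a i * h i ω + n₁ ω) * (∑ i, h i ω * x i + n₂ ω)) ^ 2) μ ∧
      ∫ ω, ((∑ i, a i * h i ω + n₁ ω) * (∑ i, h i ω * x i + n₂ ω)) ^ 2 ∂μ =
        (∑ i, a i ^ 2 * ∫ ω, h i ω ^ 2 ∂μ + ∫ ω, n₁ ω ^ 2 ∂μ) *
          (∑ i, x i ^ 2 * ∫ ω, h i ω ^ 2 ∂μ + ∫ ω, n₂ ω ^ 2 ∂μ)
        + 2 * (∑ i, a i * x i * ∫ ω, h i ω ^ 2 ∂μ) ^ 2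
        + ∑ i, a i ^ 2 * x i ^ 2 * (∫ ω, h i ω ^ 4 ∂μ - 3 * (∫ ω, h i ω ^ 2 ∂μ) ^ 2) := by
  classical
  have := hIndep.isProbabilityMeasure
  have hm : ∀ z, Measurable (Sum.elim h ![n₁, n₂] z) := by
    rintro (i | j)
    · exact hmeas i
    · fin_cases j <;> assumption
  have hIndep₁ : IndepFun (fun ω i => h i ω) n₁ μ := by
    refine (hIndep.indepFun_finset {.inr 0}ᶜ {.inr 0} disjoint_compl_left hm).comp
      (φ := fun v i => v ⟨.inl i, by simp⟩) (ψ := fun v => v ⟨.inr 0, by simp⟩) ?_ ?_ <;> fun_prop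
  have hIndep₂ : IndepFun (fun ω => ((fun i => h i ω), n₁ ω)) n₂ μ := by
    refine (hIndep.indepFun_finset {.inr 1}ᶜ {.inr 1} disjoint_compl_left hm).comp
      (φ := fun v => (fun i => v ⟨.inl i, by simp⟩, v ⟨.inr 0, by simp⟩))
      (ψ := fun v => v ⟨.inr 1, by simp⟩) ?_ ?_ <;> fun_prop
  have hh : iIndepFun h μ := hIndep.precomp (g := Sum.inl) Sum.inl_injective
  set U : Ω → ℝ := fun ω => ∑ i, a i * h i ω with hU
  set V : Ω → ℝ := fun ω => ∑ i, x i * h i ω with hV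
  have hU4 : MemLp U 4 μ := memLp_finsetSum _ fun i _ => (hL4 i).const_mul (a i)
  have hV4 : MemLp V 4 μ := memLp_finsetSum _ fun i _ => (hL4 i).const_mul (x i)
  have hU2 : MemLp U 2 μ := hU4.mono_exponent (by norm_num)
  have hL2 : ∀ i, MemLp (h i) 2 μ := fun i => (hL4 i).mono_exponent (by norm_num)
  have hVU : Integrable (fun ω => V ω ^ 2 * U ω ^ 2) μ :=
    (hV4.integrable_mul_mul_mul hV4 hU4 hU4).congr (ae_of_all _ fun ω => by ring)
  have hind₁ : IndepFun (fun ω => ((1 : ℝ), U ω)) n₁ μ :=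
    hIndep₁.comp (φ := fun v : ι → ℝ => (1, ∑ i, a i * v i)) (ψ := id) (by fun_prop) measurable_id
  have hind₂ : IndepFun (fun ω => (V ω ^ 2, U ω)) n₁ μ :=
    hIndep₁.comp (φ := fun v : ι → ℝ => ((∑ i, x i * v i) ^ 2, ∑ i, a i * v i)) (ψ := id)
      (by fun_prop) measurable_id
  have hind₃ : IndepFun (fun ω => ((U ω + n₁ ω) ^ 2, V ω)) n₂ μ :=
    hIndep₂.comp (φ := fun p : (ι → ℝ) × ℝ => ((∑ i, a i * p.1 i + p.2) ^ 2, ∑ i, x i * p.1 i))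
      (ψ := id) (by fun_prop) measurable_id
  obtain ⟨hint₁, hval₁⟩ := integral_mul_add_sq_of_indepFun hind₁ (fun _ => zero_le_one)
    (integrable_const 1) hU4.aestronglyMeasurable (by simpa using hU2.integrable_sq) hn₁L2 hn₁mean
  obtain ⟨hint₂, hval₂⟩ := integral_mul_add_sq_of_indepFun hind₂ (fun _ => sq_nonneg _)
    (hV4.mono_exponent (by norm_num)).integrable_sq hU4.aestronglyMeasurable hVU hn₁L2 hn₁mean
  obtain ⟨hint₃, hval₃⟩ := integral_mul_add_sq_of_indepFun hind₃ (fun _ => sq_nonneg _)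
    (by simpa using hint₁) hV4.aestronglyMeasurable
    (hint₂.congr (ae_of_all _ fun ω => mul_comm _ _)) hn₂L2 hn₂mean
  have hprod : ∀ ω, ((∑ i, a i * h i ω + n₁ ω) * (∑ i, h i ω * x i + n₂ ω)) ^ 2
      = (U ω + n₁ ω) ^ 2 * (V ω + n₂ ω) ^ 2 := fun ω => by
    simp only [hU, hV, mul_comm (h _ ω), mul_pow]
  simp_rw [hprod]
  refine ⟨hint₃, ?_⟩
  rw [hval₃, show (fun ω => (U ω + n₁ ω) ^ 2 * V ω ^ 2) = fun ω => V ω ^ 2 * (U ω + n₁ ω) ^ 2 by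
    ext; ring, hval₂]
  simp only [one_mul, integral_const, probReal_univ, smul_eq_mul, mul_one] at hval₁
  rw [hval₁, show (fun ω => V ω ^ 2 * U ω ^ 2) = fun ω => U ω ^ 2 * V ω ^ 2 by ext; ring,
    hh.integral_sq_mul_sq_sum hmeas hmean hL4, hh.integral_sq_sum hmeas hmean hL2,
    hh.integral_sq_sum hmeas hmean hL2]
  ring

end

theorem ezofl_moment_le_of_abs_le {ι : Type*} [Fintype ι] {a x E F : ι → ℝ} {c σ₁ σ₂ : ℝ}
    (ha : ∀ i, 0 ≤ a i) (hx : ∀ i, |x i| ≤ c) (hE : ∀ i, 0 ≤ E i) (hF : ∀ i, 0 ≤ F i) :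
    (∑ i, a i ^ 2 * E i + σ₁ ^ 2) * (∑ i, x i ^ 2 * E i + σ₂ ^ 2)
        + 2 * (∑ i, a i * x i * E i) ^ 2 + ∑ i, a i ^ 2 * x i ^ 2 * (F i - 3 * E i ^ 2) ≤
      σ₁ ^ 2 * σ₂ ^ 2 + c ^ 2 * σ₁ ^ 2 * ∑ i, E i + σ₂ ^ 2 * ∑ i, a i ^ 2 * E i
        + c ^ 2 * ((∑ i, ∑ j, a i ^ 2 * E i * E j) + 2 * ∑ i, ∑ j, a i * a j * E i * E j
          + ∑ i, a i ^ 2 * F i) := by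
  have hx2 : ∀ i, x i ^ 2 ≤ c ^ 2 := fun i => sq_le_sq' (abs_le.1 (hx i)).1 (abs_le.1 (hx i)).2
  have hX : ∑ i, x i ^ 2 * E i ≤ c ^ 2 * ∑ i, E i := by
    rw [Finset.mul_sum]
    exact Finset.sum_le_sum fun i _ => mul_le_mul_of_nonneg_right (hx2 i) (hE i)
  have hA : 0 ≤ ∑ i, a i ^ 2 * E i := Finset.sum_nonneg fun i _ => by have := hE i; positivity
  have hP : (∑ i, a i * x i * E i) ^ 2 ≤ c ^ 2 * ∑ i, ∑ j, a i * a j * E i * E j := by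
    have habs : |∑ i, a i * x i * E i| ≤ c * ∑ i, a i * E i := by
      refine (Finset.abs_sum_le_sum_abs _ _).trans ?_
      rw [Finset.mul_sum]
      refine Finset.sum_le_sum fun i _ => ?_
      rw [abs_mul, abs_mul, abs_of_nonneg (ha i), abs_of_nonneg (hE i)]
      nlinarith [mul_nonneg (ha i) (hE i), hx i]
    have hsq : (∑ i, a i * E i) ^ 2 = ∑ i, ∑ j, a i * a j * E i * E j := by
      rw [sq, Finset.sum_mul_sum]
      exact Finset.sum_congr rfl fun i _ => Finset.sum_congr rfl fun j _ => by ring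
    rw [← hsq, ← mul_pow, ← sq_abs]
    exact pow_le_pow_left₀ (abs_nonneg _) habs 2
  have hD : ∑ i, a i ^ 2 * x i ^ 2 * (F i - 3 * E i ^ 2) ≤ c ^ 2 * ∑ i, a i ^ 2 * F i := by
    rw [Finset.mul_sum]
    refine Finset.sum_le_sum fun i _ => ?_
    nlinarith [mul_le_mul_of_nonneg_right (hx2 i) (mul_nonneg (sq_nonneg (a i)) (hF i)),
      mul_nonneg (mul_nonneg (sq_nonneg (a i)) (sq_nonneg (x i))) (sq_nonneg (E i))]
  have hAE : (∑ i, ∑ j, a i ^ 2 * E i * E j) = (∑ i, a i ^ 2 * E i) * ∑ i, E i := by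
    rw [Finset.sum_mul_sum]
  rw [hAE]
  nlinarith [mul_le_mul_of_nonneg_left hX hA, mul_le_mul_of_nonneg_left hX (sq_nonneg σ₁)]

/-- Second-moment bound for the EZOFL zero-order gradient estimate (Lemma 2):
`E[‖Φ (∑ aᵢhᵢ + n₁)(∑ hᵢXᵢ + n₂)‖²]` is bounded by the explicit constant
`b₂² [σ₁²σ₂² + 4b₂²L²γ²σ₁² ∑ E[hᵢ²] + σ₂² ∑ aᵢ²E[hᵢ²]
  + 4b₂²L²γ² (∑∑ aᵢ²E[hᵢ²]E[hⱼ²] + 2∑∑ aᵢaⱼE[hᵢ²]E[hⱼ²] + ∑ aᵢ²E[hᵢ⁴])]`. -/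
theorem ezofl_second_moment_bound
    {d N : ℕ} {Ω : Type*} [MeasurableSpace Ω] (μ : Measure Ω) [IsProbabilityMeasure μ]
    (b₂ L γ σ₁ σ₂ : ℝ)
    (Φ : Ω → EuclideanSpace ℝ (Fin d)) (hΦmeas : Measurable Φ)
    (hΦbdd : ∀ᵐ ω ∂μ, ‖Φ ω‖ ≤ b₂)
    (X : Fin N → Ω → ℝ) (hXmeas : ∀ i, Measurable (X i))
    (hXbdd : ∀ i, ∀ᵐ ω ∂μ, |X i ω| ≤ 2 * L * γ * b₂)
    (h : Fin N → Ω → ℝ) (n1 n2 : Ω → ℝ)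
    (hmeas : ∀ i, Measurable (h i)) (hn1 : Measurable n1) (hn2 : Measurable n2)
    (hL4 : ∀ i, MemLp (h i) 4 μ) (hn1L2 : MemLp n1 2 μ) (hn2L2 : MemLp n2 2 μ)
    (hmean : ∀ i, ∫ ω, h i ω ∂μ = 0)
    (hn1mean : ∫ ω, n1 ω ∂μ = 0) (hn2mean : ∫ ω, n2 ω ∂μ = 0)
    (hn1var : ∫ ω, (n1 ω) ^ 2 ∂μ = σ₁ ^ 2) (hn2var : ∫ ω, (n2 ω) ^ 2 ∂μ = σ₂ ^ 2)
    (hIndep : iIndepFun (Sum.elim h ![n1, n2]) μ)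
    (hIndepBlock : IndepFun (fun ω => (fun i => h i ω, n1 ω, n2 ω))
      (fun ω => (Φ ω, fun i => X i ω)) μ)
    (a : Fin N → ℝ) (hapos : ∀ i, 0 ≤ a i) :
    ∫ ω, ‖((∑ i, a i * h i ω + n1 ω) * (∑ i, h i ω * X i ω + n2 ω)) • Φ ω‖ ^ 2 ∂μ ≤
      b₂ ^ 2 * (σ₁ ^ 2 * σ₂ ^ 2
        + 4 * b₂ ^ 2 * L ^ 2 * γ ^ 2 * σ₁ ^ 2 * ∑ i, ∫ ω, (h i ω) ^ 2 ∂μ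
        + σ₂ ^ 2 * ∑ i, a i ^ 2 * ∫ ω, (h i ω) ^ 2 ∂μ
        + 4 * b₂ ^ 2 * L ^ 2 * γ ^ 2 *
          ((∑ i, ∑ j, a i ^ 2 * (∫ ω, (h i ω) ^ 2 ∂μ) * (∫ ω, (h j ω) ^ 2 ∂μ))
            + 2 * ∑ i, ∑ j, a i * a j * (∫ ω, (h i ω) ^ 2 ∂μ) * (∫ ω, (h j ω) ^ 2 ∂μ)
            + ∑ i, a i ^ 2 * ∫ ω, (h i ω) ^ 4 ∂μ)) := by
  have hE : ∀ i, 0 ≤ ∫ ω, h i ω ^ 2 ∂μ := fun i => integral_nonneg fun _ => sq_nonneg _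
  have hF : ∀ i, 0 ≤ ∫ ω, h i ω ^ 4 ∂μ := fun i => integral_nonneg fun _ => by positivity
  have hnorm : ∀ ω, ‖((∑ i, a i * h i ω + n1 ω) * (∑ i, h i ω * X i ω + n2 ω)) • Φ ω‖ ^ 2
      = ((∑ i, a i * h i ω + n1 ω) * (∑ i, h i ω * X i ω + n2 ω)) ^ 2 * ‖Φ ω‖ ^ 2 := fun ω => by
    rw [norm_smul, mul_pow, Real.norm_eq_abs, sq_abs]
  simp_rw [hnorm]
  refine integral_comp_le_of_indepFun hIndepBlock (T := fun ω => (fun i => h i ω, n1 ω, n2 ω))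
    (S := fun ω => (Φ ω, fun i => X i ω))
    (G := fun t s => ((∑ i, a i * t.1 i + t.2.1) * (∑ i, t.1 i * s.2 i + t.2.2)) ^ 2 * ‖s.1‖ ^ 2)
    (by fun_prop) (by fun_prop) (by fun_prop) (fun _ _ => by positivity) ?_
  filter_upwards [hΦbdd, ae_all_iff.2 hXbdd] with ω hΦω hXω
  obtain ⟨hint, hval⟩ := integral_sq_sum_add_mul_sum_add hIndep hmeas hn1 hn2 hL4 hn1L2 hn2L2 hmean
    hn1mean hn2mean a (fun i => X i ω)
  refine ⟨hint.mul_const _, ?_⟩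
  have hbound := ezofl_moment_le_of_abs_le (σ₁ := σ₁) (σ₂ := σ₂) hapos hXω hE hF
  rw [hn1var, hn2var] at hval
  rw [← hval] at hbound
  rw [integral_mul_const]
  calc _ ≤ _ * b₂ ^ 2 := mul_le_mul hbound (pow_le_pow_left₀ (norm_nonneg _) hΦω 2) (sq_nonneg _)
        ((integral_nonneg fun _ => sq_nonneg _).trans hbound)
    _ = _ := by ring
end

section
/- Let v₁, …, v_N ∈ ℝ^d be fixed vectors. Let Φ be a random vector in ℝ^d satisfying the perturbation assumption with constants b₁, b₂ > 0, and let h₁, …, h_N, n₁, n₂ be mutually independent zero-mean real random variables with finite second moments and E[h_i²] > 0, independent of Φ. Set a_i = 1/E[h_i²]. Then E[Φ (∑_{i=1}^N a_i h_i + n₁)(∑_{i=1}^N ⟨v_i, Φ⟩ h_i + n₂)] = b₁ ∑_{i=1}^N v_i. -/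
/-!
Write `A = ∑ aᵢhᵢ + n₁` for the received pilot. Expanding the second factor, the estimate is
`∑ⱼ (A hⱼ) • (⟪vⱼ, Φ⟫ • Φ) + (A n₂) • Φ`, and since the channels and noises are independent of `Φ`
each expectation factors. Zero-mean independent variables are uncorrelated, so
`E[A hⱼ] = aⱼ E[hⱼ²] = 1` and `E[A n₂] = 0`, while the isotropy of `Φ` gives
`E[⟪v, Φ⟫ • Φ] = b₁ • v`.
-/

open MeasureTheory ProbabilityTheory

section

variable {Ω : Type*} [MeasurableSpace Ω] {μ : Measure Ω}

theorem integral_sum_mul_eq_of_pairwise_indepFun {ι : Type*} [Fintype ι] {X : ι → Ω → ℝ}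
    (hX : Pairwise fun i j => IndepFun (X i) (X j) μ) (hL2 : ∀ i, MemLp (X i) 2 μ)
    (hmean : ∀ i, ∫ ω, X i ω ∂μ = 0) (c : ι → ℝ) (k : ι) :
    ∫ ω, (∑ i, c i * X i ω) * X k ω ∂μ = c k * ∫ ω, X k ω ^ 2 ∂μ := by
  have hint : ∀ i, Integrable (fun ω => c i * (X i ω * X k ω)) μ :=
    fun i => ((hL2 i).integrable_mul (hL2 k)).const_mul (c i)
  have horth : ∀ i, i ≠ k → ∫ ω, X i ω * X k ω ∂μ = 0 := fun i hik => by
    rw [(hX hik).integral_fun_mul_eq_mul_integral (hL2 i).1 (hL2 k).1, hmean, zero_mul]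
  calc ∫ ω, (∑ i, c i * X i ω) * X k ω ∂μ = ∑ i, c i * ∫ ω, X i ω * X k ω ∂μ := by
        simp_rw [Finset.sum_mul, mul_assoc]
        rw [integral_finsetSum _ fun i _ => hint i]
        simp_rw [integral_const_mul]
    _ = c k * ∫ ω, X k ω * X k ω ∂μ :=
        Fintype.sum_eq_single k fun i hik => by rw [horth i hik, mul_zero]
    _ = c k * ∫ ω, X k ω ^ 2 ∂μ := by simp_rw [sq]

theorem integral_inner_smul_self_eq {ι : Type*} [Fintype ι] {Φ : Ω → EuclideanSpace ℝ ι} {b : ℝ}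
    (hΦ : MemLp Φ 2 μ) (hcov : ∀ j l, j ≠ l → ∫ ω, Φ ω j * Φ ω l ∂μ = 0)
    (hvar : ∀ j, ∫ ω, Φ ω j ^ 2 ∂μ = b) (v : EuclideanSpace ℝ ι) :
    ∫ ω, inner ℝ v (Φ ω) • Φ ω ∂μ = b • v := by
  have hcoord : ∀ j, MemLp (fun ω => Φ ω j) 2 μ :=
    fun j => (EuclideanSpace.proj (𝕜 := ℝ) j).comp_memLp' hΦ
  have hprod : ∀ m l, Integrable (fun ω => Φ ω m * Φ ω l) μ :=
    fun m l => (hcoord m).integrable_mul (hcoord l)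
  have hint : Integrable (fun ω => inner ℝ v (Φ ω) • Φ ω) μ :=
    memLp_one_iff_integrable.1 (hΦ.smul (p := 2) (hΦ.const_inner (𝕜 := ℝ) v))
  ext l
  calc (∫ ω, inner ℝ v (Φ ω) • Φ ω ∂μ) l = ∫ ω, (inner ℝ v (Φ ω) • Φ ω) l ∂μ :=
        ((EuclideanSpace.proj l).integral_comp_comm hint).symm
    _ = ∫ ω, ∑ m, v m * (Φ ω m * Φ ω l) ∂μ := by
        congr 1; ext ω
        simp only [PiLp.smul_apply, smul_eq_mul, PiLp.inner_apply, RCLike.inner_apply,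
          conj_trivial, Finset.sum_mul]
        exact Finset.sum_congr rfl fun m _ => by ring
    _ = ∑ m, v m * ∫ ω, Φ ω m * Φ ω l ∂μ := by
        rw [integral_finsetSum _ fun m _ => (hprod m l).const_mul _]
        simp_rw [integral_const_mul]
    _ = v l * ∫ ω, Φ ω l ^ 2 ∂μ := by
        rw [Fintype.sum_eq_single l fun m hml => by rw [hcov m l hml, mul_zero]]
        simp_rw [sq]
    _ = (b • v) l := by rw [hvar, PiLp.smul_apply, smul_eq_mul, mul_comm]

theorem integral_pilot_mul {ι : Type*} [Fintype ι] {h : ι → Ω → ℝ} {n₁ n₂ : Ω → ℝ}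
    (hL2 : ∀ i, MemLp (h i) 2 μ) (hn₁L2 : MemLp n₁ 2 μ) (hn₂L2 : MemLp n₂ 2 μ)
    (hmean : ∀ i, ∫ ω, h i ω ∂μ = 0) (hn₁mean : ∫ ω, n₁ ω ∂μ = 0) (hn₂mean : ∫ ω, n₂ ω ∂μ = 0)
    (hIndep : iIndepFun (Sum.elim h ![n₁, n₂]) μ) (a : ι → ℝ) (k : ι ⊕ Fin 2) :
    ∫ ω, (∑ i, a i * h i ω + n₁ ω) * Sum.elim h ![n₁, n₂] k ω ∂μ
      = Sum.elim a ![1, 0] k * ∫ ω, Sum.elim h ![n₁, n₂] k ω ^ 2 ∂μ := by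
  -- the pilot is the combination of the family `(h, n₁, n₂)` with coefficients `(a, 1, 0)`
  have hsum : ∀ ω, ∑ i, a i * h i ω + n₁ ω
      = ∑ k, Sum.elim a ![1, 0] k * Sum.elim h ![n₁, n₂] k ω := fun ω => by
    simp [Fintype.sum_sum_type, Fin.sum_univ_two]
  simp_rw [hsum]
  exact integral_sum_mul_eq_of_pairwise_indepFun (fun i j hij => hIndep.indepFun hij)
    (by simp [Sum.forall, Fin.forall_fin_two, hL2, hn₁L2, hn₂L2])
    (by simp [Sum.forall, Fin.forall_fin_two, hmean, hn₁mean, hn₂mean]) _ k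

theorem integral_mul_sum_inner_smul_of_indepFun [IsFiniteMeasure μ] {ι : Type*} [Fintype ι]
    {E : Type*} [NormedAddCommGroup E] [InnerProductSpace ℝ E] [CompleteSpace E]
    [MeasurableSpace E] [BorelSpace E] {A n : Ω → ℝ} {H : ι → Ω → ℝ} {Φ : Ω → E}
    (hind : IndepFun (fun ω => (A ω, fun j => H j ω, n ω)) Φ μ) (hA : MemLp A 2 μ)
    (hH : ∀ j, MemLp (H j) 2 μ) (hn : MemLp n 2 μ) (hΦ : MemLp Φ 2 μ) (v : ι → E) :
    ∫ ω, (A ω * (∑ j, inner ℝ (v j) (Φ ω) * H j ω + n ω)) • Φ ω ∂μ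
      = ∑ j, (∫ ω, A ω * H j ω ∂μ) • ∫ ω, inner ℝ (v j) (Φ ω) • Φ ω ∂μ
        + (∫ ω, A ω * n ω ∂μ) • ∫ ω, Φ ω ∂μ := by
  have hindH : ∀ j, IndepFun (fun ω => A ω * H j ω) (fun ω => inner ℝ (v j) (Φ ω) • Φ ω) μ :=
    fun j => hind.comp (φ := fun p : ℝ × (ι → ℝ) × ℝ => p.1 * p.2.1 j)
      (ψ := fun x => inner ℝ (v j) x • x) (by fun_prop) (by fun_prop)
  have hindn : IndepFun (fun ω => A ω * n ω) Φ μ :=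
    hind.comp (φ := fun p : ℝ × (ι → ℝ) × ℝ => p.1 * p.2.2) (by fun_prop) measurable_id
  have hAH : ∀ j, Integrable (fun ω => A ω * H j ω) μ := fun j => hA.integrable_mul (hH j)
  have hAn : Integrable (fun ω => A ω * n ω) μ := hA.integrable_mul hn
  have hinner : ∀ j, Integrable (fun ω => inner ℝ (v j) (Φ ω) • Φ ω) μ := fun j =>
    memLp_one_iff_integrable.1 (hΦ.smul (p := 2) (hΦ.const_inner (𝕜 := ℝ) (v j)))
  have hintH : ∀ j, Integrable (fun ω => (A ω * H j ω) • (inner ℝ (v j) (Φ ω) • Φ ω)) μ :=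
    fun j => (hindH j).integrable_smul (hAH j) (hinner j)
  have hintn : Integrable (fun ω => (A ω * n ω) • Φ ω) μ :=
    hindn.integrable_smul hAn (hΦ.integrable one_le_two)
  calc ∫ ω, (A ω * (∑ j, inner ℝ (v j) (Φ ω) * H j ω + n ω)) • Φ ω ∂μ
      = ∫ ω, ∑ j, (A ω * H j ω) • (inner ℝ (v j) (Φ ω) • Φ ω) + (A ω * n ω) • Φ ω ∂μ := by
        congr 1; ext ω
        simp only [mul_add, add_smul, Finset.mul_sum, Finset.sum_smul, smul_smul]
        congr 1
        exact Finset.sum_congr rfl fun j _ => by congr 1; ring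
    _ = _ := by
        rw [integral_add (integrable_finsetSum _ fun j _ => hintH j) hintn,
          integral_finsetSum _ fun j _ => hintH j]
        congr 1
        · exact Finset.sum_congr rfl fun j _ =>
            (hindH j).integral_fun_smul_eq_smul_integral (hAH j).1 (hinner j).1
        · exact hindn.integral_fun_smul_eq_smul_integral hAn.1 hΦ.1

end

theorem efofl_unbiased_general
    {d N : ℕ} {Ω : Type*} [MeasurableSpace Ω] (μ : Measure Ω) [IsProbabilityMeasure μ]
    (v : Fin N → EuclideanSpace ℝ (Fin d))
    (b₁ b₂ : ℝ)
    (Φ : Ω → EuclideanSpace ℝ (Fin d)) (hΦmeas : Measurable Φ)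
    (hΦcov : ∀ j l : Fin d, j ≠ l → ∫ ω, Φ ω j * Φ ω l ∂μ = 0)
    (hΦvar : ∀ j : Fin d, ∫ ω, (Φ ω j) ^ 2 ∂μ = b₁)
    (hΦbdd : ∀ᵐ ω ∂μ, ‖Φ ω‖ ≤ b₂)
    (h : Fin N → Ω → ℝ) (n1 n2 : Ω → ℝ)
    (hL2 : ∀ i, MemLp (h i) 2 μ) (hn1L2 : MemLp n1 2 μ) (hn2L2 : MemLp n2 2 μ)
    (hmean : ∀ i, ∫ ω, h i ω ∂μ = 0)
    (hn1mean : ∫ ω, n1 ω ∂μ = 0) (hn2mean : ∫ ω, n2 ω ∂μ = 0)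
    (hpos : ∀ i, 0 < ∫ ω, (h i ω) ^ 2 ∂μ)
    (hIndep : iIndepFun (Sum.elim h ![n1, n2]) μ)
    (hIndepΦ : IndepFun (fun ω => (fun i => h i ω, n1 ω, n2 ω)) Φ μ)
    (a : Fin N → ℝ) (ha : ∀ i, a i = (∫ ω, (h i ω) ^ 2 ∂μ)⁻¹) :
    (∫ ω, ((∑ i, a i * h i ω + n1 ω) *
        (∑ i, (inner ℝ (v i) (Φ ω) : ℝ) * h i ω + n2 ω)) • Φ ω ∂μ) =
      b₁ • ∑ i, v i := by
  have hpilot := integral_pilot_mul hL2 hn1L2 hn2L2 hmean hn1mean hn2mean hIndep a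
  have hpilot_h : ∀ j, ∫ ω, (∑ i, a i * h i ω + n1 ω) * h j ω ∂μ = 1 := fun j => by
    simpa [ha j, (hpos j).ne'] using hpilot (.inl j)
  have hpilot_n2 : ∫ ω, (∑ i, a i * h i ω + n1 ω) * n2 ω ∂μ = 0 := by
    simpa using hpilot (.inr 1)
  have hAL2 : MemLp (fun ω => ∑ i, a i * h i ω + n1 ω) 2 μ :=
    (memLp_finsetSum _ fun i _ => (hL2 i).const_mul (a i)).add hn1L2
  have hΦL2 : MemLp Φ 2 μ :=
    (memLp_top_of_bound hΦmeas.aestronglyMeasurable b₂ hΦbdd).mono_exponent le_top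
  have hind : IndepFun (fun ω => (∑ i, a i * h i ω + n1 ω, fun j => h j ω, n2 ω)) Φ μ :=
    hIndepΦ.comp (φ := fun p : (Fin N → ℝ) × ℝ × ℝ => (∑ i, a i * p.1 i + p.2.1, p.1, p.2.2))
      (by fun_prop) measurable_id
  rw [integral_mul_sum_inner_smul_of_indepFun hind hAL2 hL2 hn2L2 hΦL2 v]
  simp [hpilot_h, hpilot_n2, integral_inner_smul_self_eq hΦL2 hΦcov hΦvar, Finset.smul_sum]

/-- Unbiasedness of the EFOFL first-order gradient estimate (Lemma 3): with a perturbation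
vector `Φ` (constants `b₁, b₂`), zero-mean mutually independent channels/noises independent
of `Φ`, and pilots `a_i = 1/E[h_i²]`,
`E[Φ (∑ aᵢhᵢ + n₁)(∑ ⟨vᵢ,Φ⟩hᵢ + n₂)] = b₁ ∑ vᵢ`. -/
theorem efofl_unbiased
    {d N : ℕ} {Ω : Type*} [MeasurableSpace Ω] (μ : Measure Ω) [IsProbabilityMeasure μ]
    (v : Fin N → EuclideanSpace ℝ (Fin d))
    (b₁ b₂ : ℝ) (hb₁ : 0 < b₁) (hb₂ : 0 < b₂)
    (Φ : Ω → EuclideanSpace ℝ (Fin d)) (hΦmeas : Measurable Φ)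
    (hΦcov : ∀ j l : Fin d, j ≠ l → ∫ ω, Φ ω j * Φ ω l ∂μ = 0)
    (hΦvar : ∀ j : Fin d, ∫ ω, (Φ ω j) ^ 2 ∂μ = b₁)
    (hΦbdd : ∀ᵐ ω ∂μ, ‖Φ ω‖ ≤ b₂)
    (h : Fin N → Ω → ℝ) (n1 n2 : Ω → ℝ)
    (hmeas : ∀ i, Measurable (h i)) (hn1 : Measurable n1) (hn2 : Measurable n2)
    (hL2 : ∀ i, MemLp (h i) 2 μ) (hn1L2 : MemLp n1 2 μ) (hn2L2 : MemLp n2 2 μ)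
    (hmean : ∀ i, ∫ ω, h i ω ∂μ = 0)
    (hn1mean : ∫ ω, n1 ω ∂μ = 0) (hn2mean : ∫ ω, n2 ω ∂μ = 0)
    (hpos : ∀ i, 0 < ∫ ω, (h i ω) ^ 2 ∂μ)
    (hIndep : iIndepFun (Sum.elim h ![n1, n2]) μ)
    (hIndepΦ : IndepFun (fun ω => (fun i => h i ω, n1 ω, n2 ω)) Φ μ)
    (a : Fin N → ℝ) (ha : ∀ i, a i = (∫ ω, (h i ω) ^ 2 ∂μ)⁻¹) :
    (∫ ω, ((∑ i, a i * h i ω + n1 ω) *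
        (∑ i, (inner ℝ (v i) (Φ ω) : ℝ) * h i ω + n2 ω)) • Φ ω ∂μ) =
      b₁ • ∑ i, v i :=
  efofl_unbiased_general μ v b₁ b₂ Φ hΦmeas hΦcov hΦvar hΦbdd h n1 n2 hL2 hn1L2 hn2L2 hmean hn1mean
    hn2mean hpos hIndep hIndepΦ a ha
end

section
/- Under the setting of the finite-horizon rate bound for Algorithm 1 — F : ℝ^d → ℝ differentiable, μ-smooth, bounded below with Δ̂ := F(θ₀) − inf F; step sizes η = η₀K^{-1/4}, γ = γ₀K^{-1/4}; iterates θ_{k+1} = θ_k − η g_k for k = 0, …, K−1 with E[g_k | 𝓗_k] = c₁γ(∇F(θ_k) + δ_k), ‖δ_k‖ ≤ c₃γ almost surely, and E[‖g_k‖² | 𝓗_k] ≤ Cγ² almost surely — if ε, β > 0 and K ≥ (1/(ε²β²)) (2Δ̂/(η₀γ₀c₁) + c₃²γ₀² + Cμη₀γ₀/c₁)², then P( min_{0 ≤ k ≤ K−1} ‖∇F(θ_k)‖² < ε ) ≥ 1 − β. -/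
/-!
Smoothness gives the descent inequality `F(θ - ηg) ≤ F(θ) - η⟪∇F(θ), g⟫ + (μ/2)η²‖g‖²`. Taking
expectations and conditioning on `𝓗_k`, the cross term becomes
`c₁γ(‖∇F(θ_k)‖² + ⟪∇F(θ_k), δ_k⟫) ≥ (c₁γ/2)(‖∇F(θ_k)‖² - c₃²γ²)`, and the second-moment bound
controls the quadratic term. Telescoping over `k < K` and using `F ≥ inf F` bounds
`∑_k E‖∇F(θ_k)‖²` by `√K (2Δ̂/(η₀γ₀c₁) + c₃²γ₀² + Cμη₀γ₀/c₁)`, which the choice of `K` makes at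
most `Kεβ`. By Markov's inequality, the event that `‖∇F(θ_k)‖² ≥ ε` for every `k < K` then has
probability at most `β`.
-/

open MeasureTheory Filter

open scoped InnerProductSpace

theorem nonneg_of_norm_sub_le_mul_norm_sub {X Y : Type*} [NormedAddCommGroup X] [Nontrivial X]
    [NormedAddCommGroup Y] {f : X → Y} {L : ℝ} (hf : ∀ x y, ‖f x - f y‖ ≤ L * ‖x - y‖) :
    0 ≤ L := by
  obtain ⟨x, hx⟩ := exists_ne (0 : X)
  have h := (norm_nonneg _).trans (hf x 0)
  rw [sub_zero] at h
  exact nonneg_of_mul_nonneg_left h (norm_pos_iff.2 hx)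

theorem sum_le_of_le_sub_add {u v : ℕ → ℝ} {D : ℝ} {K : ℕ}
    (h : ∀ k < K, u (k + 1) ≤ u k - v k + D) :
    ∑ k ∈ Finset.range K, v k ≤ u 0 - u K + K * D :=
  calc ∑ k ∈ Finset.range K, v k ≤ ∑ k ∈ Finset.range K, (u k - u (k + 1) + D) :=
        Finset.sum_le_sum fun k hk => by linarith [h k (Finset.mem_range.1 hk)]
    _ = u 0 - u K + K * D := by
        rw [Finset.sum_add_distrib, Finset.sum_range_sub', Finset.sum_const, Finset.card_range,
          nsmul_eq_mul]

section LipschitzGradient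

variable {E : Type*} [NormedAddCommGroup E] [InnerProductSpace ℝ E]

theorem norm_sq_sub_sq_le_two_inner_add {x δ : E} {b : ℝ} (hδ : ‖δ‖ ≤ b) :
    ‖x‖ ^ 2 - b ^ 2 ≤ 2 * ⟪x, x + δ⟫_ℝ := by
  rw [inner_add_right, real_inner_self_eq_norm_sq]
  have hxδ : -(‖x‖ * b) ≤ ⟪x, δ⟫_ℝ :=
    (neg_le_neg (mul_le_mul_of_nonneg_left hδ (norm_nonneg x))).trans
      (neg_le_of_abs_le (abs_real_inner_le_norm x δ))
  nlinarith [sq_nonneg (‖x‖ - b)]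

variable [CompleteSpace E] {F : E → ℝ} {L : ℝ}

theorem continuous_gradient_of_lipschitz
    (hL : ∀ x y, ‖gradient F x - gradient F y‖ ≤ L * ‖x - y‖) : Continuous (gradient F) :=
  (LipschitzWith.of_dist_le' fun x y => by simpa only [dist_eq_norm] using hL x y).continuous

theorem image_le_add_inner_gradient_add_sq (hF : Differentiable ℝ F)
    (hL : ∀ x y, ‖gradient F x - gradient F y‖ ≤ L * ‖x - y‖) (x y : E) :
    F y ≤ F x + ⟪gradient F x, y - x⟫_ℝ + L / 2 * ‖y - x‖ ^ 2 := by
  set v := y - x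
  let ψ : ℝ → ℝ := fun t => F (x + t • v) - t * ⟪gradient F x, v⟫_ℝ - L / 2 * t ^ 2 * ‖v‖ ^ 2
  have hψ : ∀ t, HasDerivAt ψ
      (⟪gradient F (x + t • v) - gradient F x, v⟫_ℝ - L * t * ‖v‖ ^ 2) t := by
    intro t
    have hFt : HasDerivAt (fun s : ℝ => F (x + s • v)) ⟪gradient F (x + t • v), v⟫_ℝ t := by
      simpa [InnerProductSpace.toDual_apply_apply, Function.comp_def] using
        (hF (x + t • v)).hasGradientAt.hasFDerivAt.comp_hasDerivAt t
          (((hasDerivAt_id t).smul_const v).const_add x)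
    exact ((hFt.sub (hasDerivAt_mul_const _)).sub
      (((hasDerivAt_pow 2 t).const_mul (L / 2)).mul_const (‖v‖ ^ 2))).congr_deriv
        (by rw [inner_sub_left]; ring)
  -- Along the segment the gradient moves by at most `L t ‖v‖`, which the quadratic term absorbs.
  have hψ_antitone : AntitoneOn ψ (Set.Ici 0) := by
    refine antitoneOn_of_hasDerivWithinAt_nonpos (convex_Ici 0)
      (fun t _ => (hψ t).continuousAt.continuousWithinAt) (fun t _ => (hψ t).hasDerivWithinAt)
      fun t ht => ?_
    rw [interior_Ici, Set.mem_Ioi] at ht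
    have hmove : ‖gradient F (x + t • v) - gradient F x‖ ≤ L * t * ‖v‖ := by
      simpa [norm_smul, abs_of_pos ht, mul_assoc] using hL (x + t • v) x
    have := (real_inner_le_norm _ v).trans (mul_le_mul_of_nonneg_right hmove (norm_nonneg v))
    linarith
  have h01 := hψ_antitone (Set.mem_Ici.2 le_rfl) (Set.mem_Ici.2 zero_le_one) zero_le_one
  simp only [ψ, v, zero_smul, add_zero, zero_mul, sub_zero, one_smul, one_mul, one_pow,
    add_sub_cancel] at h01
  linarith

end LipschitzGradient

namespace MeasureTheory

variable {Ω E : Type*} {m m0 : MeasurableSpace Ω} {μ : Measure Ω}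
  [NormedAddCommGroup E] [InnerProductSpace ℝ E]

theorem ofReal_one_sub_le_measure_exists_lt [IsProbabilityMeasure μ] {f : ℕ → Ω → ℝ} {K : ℕ}
    {ε β : ℝ} (hK : 0 < K) (hε : 0 < ε) (hf0 : ∀ k < K, 0 ≤ᵐ[μ] f k)
    (hf : ∀ k < K, Integrable (f k) μ)
    (hsum : ∑ k ∈ Finset.range K, ∫ ω, f k ω ∂μ ≤ K * (ε * β)) :
    ENNReal.ofReal (1 - β) ≤ μ {ω | ∃ k < K, f k ω < ε} := by
  set A := {ω | ∀ k < K, ε ≤ f k ω}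
  have hmarkov : ∀ k < K, ε * μ.real A ≤ ∫ ω, f k ω ∂μ := fun k hk =>
    (mul_le_mul_of_nonneg_left (measureReal_mono fun ω (hω : ω ∈ A) => hω k hk) hε.le).trans
      (mul_meas_ge_le_integral_of_nonneg (hf0 k hk) (hf k hk) ε)
  have hA : μ.real A ≤ β := by
    have h := (Finset.sum_le_sum fun k hk => hmarkov k (Finset.mem_range.1 hk)).trans hsum
    rw [Finset.sum_const, Finset.card_range, nsmul_eq_mul] at h
    exact le_of_mul_le_mul_left (by linarith) (by positivity : (0 : ℝ) < K * ε)
  have hcompl : {ω | ∃ k < K, f k ω < ε} = Aᶜ := by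
    ext ω
    simp [A]
  rw [hcompl, ENNReal.ofReal_sub _ (measureReal_nonneg.trans hA), ENNReal.ofReal_one,
    tsub_le_iff_right]
  calc 1 = μ Set.univ := measure_univ.symm
    _ ≤ μ A + μ Aᶜ := measure_univ_le_add_compl A
    _ ≤ μ Aᶜ + ENNReal.ofReal β := by
        rw [add_comm]
        gcongr
        rw [← ofReal_measureReal]
        exact ENNReal.ofReal_le_ofReal hA

theorem MemLp.integrable_inner {X Y : Ω → E} (hX : MemLp X 2 μ) (hY : MemLp Y 2 μ) :
    Integrable (fun ω => ⟪X ω, Y ω⟫_ℝ) μ :=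
  (L2.integrable_inner (𝕜 := ℝ) hX.toLp hY.toLp).congr <| by
    filter_upwards [hX.coeFn_toLp, hY.coeFn_toLp] with ω hXω hYω
    rw [hXω, hYω]

theorem memLp_of_eq_sub_smul {θ g : ℕ → Ω → E} {K : ℕ} {η : ℝ} (hθ0 : MemLp (θ 0) 2 μ)
    (hg : ∀ k, MemLp (g k) 2 μ) (hupdate : ∀ k < K, ∀ ω, θ (k + 1) ω = θ k ω - η • g k ω) :
    ∀ k ≤ K, MemLp (θ k) 2 μ := by
  intro k hk
  induction k with
  | zero => exact hθ0
  | succ k ih =>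
    rw [show θ (k + 1) = fun ω => θ k ω - η • g k ω from funext (hupdate k hk)]
    exact (ih (by omega)).sub ((hg k).const_smul η)

variable [CompleteSpace E]

theorem integral_inner_condExp (hm : m ≤ m0) [SigmaFinite (μ.trim hm)] {X Y : Ω → E}
    (hX : StronglyMeasurable[m] X) (hXY : Integrable (fun ω => ⟪X ω, Y ω⟫_ℝ) μ)
    (hY : Integrable Y μ) :
    ∫ ω, ⟪X ω, Y ω⟫_ℝ ∂μ = ∫ ω, ⟪X ω, μ[Y | m] ω⟫_ℝ ∂μ :=
  (integral_condExp hm).symm.trans <| integral_congr_ae <|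
    condExp_bilin_of_stronglyMeasurable_left (innerSL ℝ) hX hXY hY

variable {F : E → ℝ} {L : ℝ} {X : Ω → E}

theorem MemLp.gradient_comp [IsFiniteMeasure μ]
    (hL : ∀ x y, ‖gradient F x - gradient F y‖ ≤ L * ‖x - y‖)
    (hX : MemLp X 2 μ) : MemLp (fun ω => gradient F (X ω)) 2 μ := by
  refine MemLp.of_le ((memLp_const ‖gradient F 0‖).add (hX.norm.const_mul L))
    ((continuous_gradient_of_lipschitz hL).comp_aestronglyMeasurable hX.aestronglyMeasurable)
    (ae_of_all _ fun ω => ?_)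
  have h := (norm_le_norm_add_norm_sub' (gradient F (X ω)) (gradient F 0)).trans
    (add_le_add_right (hL (X ω) 0) _)
  rw [sub_zero] at h
  exact h.trans (le_abs_self _)

theorem MemLp.integrable_comp_of_lipschitz_gradient [IsFiniteMeasure μ]
    (hF : Differentiable ℝ F)
    (hL : ∀ x y, ‖gradient F x - gradient F y‖ ≤ L * ‖x - y‖) (hbdd : BddBelow (Set.range F))
    (hX : MemLp X 2 μ) : Integrable (fun ω => F (X ω)) μ := by
  obtain ⟨b, hb⟩ := hbdd
  have hupper : Integrable (fun ω => F 0 + ⟪gradient F 0, X ω⟫_ℝ + L / 2 * ‖X ω‖ ^ 2) μ :=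
    ((integrable_const _).add ((hX.integrable one_le_two).const_inner _)).add
      (hX.norm.integrable_sq.const_mul _)
  refine Integrable.mono' ((integrable_const |b|).add hupper.abs)
    (hF.continuous.comp_aestronglyMeasurable hX.aestronglyMeasurable) (ae_of_all _ fun ω => ?_)
  have hup := image_le_add_inner_gradient_add_sq hF hL 0 (X ω)
  rw [sub_zero] at hup
  exact (abs_le_max_abs_abs (hb ⟨X ω, rfl⟩) hup).trans
    (max_le_add_of_nonneg (abs_nonneg _) (abs_nonneg _))

theorem integral_le_of_ae_condExp_le [IsProbabilityMeasure μ] (hm : m ≤ m0) {f : Ω → ℝ} {c : ℝ}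
    (hf : ∀ᵐ ω ∂μ, μ[f | m] ω ≤ c) : ∫ ω, f ω ∂μ ≤ c :=
  calc ∫ ω, f ω ∂μ = ∫ ω, μ[f | m] ω ∂μ := (integral_condExp hm).symm
    _ ≤ ∫ _, c ∂μ := integral_mono_ae integrable_condExp (integrable_const c) hf
    _ = c := by simp

theorem integral_inner_ge_of_condExp_ae_eq [IsProbabilityMeasure μ] (hm : m ≤ m0)
    {Y G δ : Ω → E} {a b : ℝ} (ha : 0 ≤ a) (hY : StronglyMeasurable[m] Y) (hYL2 : MemLp Y 2 μ)
    (hG : MemLp G 2 μ) (hδ : AEStronglyMeasurable δ μ) (hδb : ∀ᵐ ω ∂μ, ‖δ ω‖ ≤ b)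
    (hbias : μ[G | m] =ᵐ[μ] fun ω => a • (Y ω + δ ω)) :
    a / 2 * ∫ ω, ‖Y ω‖ ^ 2 ∂μ - a / 2 * b ^ 2 ≤ ∫ ω, ⟪Y ω, G ω⟫_ℝ ∂μ := by
  have hY_sq : Integrable (fun ω => ‖Y ω‖ ^ 2) μ := hYL2.norm.integrable_sq
  have hδL2 : MemLp δ 2 μ := MemLp.of_bound hδ b hδb
  rw [integral_inner_condExp hm hY (hYL2.integrable_inner hG) (hG.integrable one_le_two)]
  calc a / 2 * ∫ ω, ‖Y ω‖ ^ 2 ∂μ - a / 2 * b ^ 2 = ∫ ω, a / 2 * (‖Y ω‖ ^ 2 - b ^ 2) ∂μ := by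
        rw [integral_const_mul, integral_sub hY_sq (integrable_const _), integral_const]
        simp only [probReal_univ, one_smul]
        ring
    _ ≤ ∫ ω, ⟪Y ω, a • (Y ω + δ ω)⟫_ℝ ∂μ := by
        refine integral_mono_ae ((hY_sq.sub (integrable_const _)).const_mul _)
          (hYL2.integrable_inner ((hYL2.add hδL2).const_smul a)) ?_
        filter_upwards [hδb] with ω hω
        rw [real_inner_smul_right]
        nlinarith [norm_sq_sub_sq_le_two_inner_add (x := Y ω) hω]
    _ = ∫ ω, ⟪Y ω, μ[G | m] ω⟫_ℝ ∂μ :=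
        integral_congr_ae (hbias.mono fun ω h => by simp only [h])

theorem integral_comp_sub_smul_le [IsProbabilityMeasure μ] (hm : m ≤ m0)
    (hF : Differentiable ℝ F) (hL : ∀ x y, ‖gradient F x - gradient F y‖ ≤ L * ‖x - y‖)
    (hL0 : 0 ≤ L) (hbdd : BddBelow (Set.range F)) {G δ : Ω → E} {a b c η : ℝ}
    (ha : 0 ≤ a) (hη : 0 ≤ η) (hX : StronglyMeasurable[m] X) (hXL2 : MemLp X 2 μ)
    (hG : MemLp G 2 μ) (hδ : AEStronglyMeasurable δ μ) (hδb : ∀ᵐ ω ∂μ, ‖δ ω‖ ≤ b)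
    (hbias : μ[G | m] =ᵐ[μ] fun ω => a • (gradient F (X ω) + δ ω))
    (hsq : ∀ᵐ ω ∂μ, μ[fun ω => ‖G ω‖ ^ 2 | m] ω ≤ c) :
    ∫ ω, F (X ω - η • G ω) ∂μ ≤ ∫ ω, F (X ω) ∂μ
      - η * a / 2 * ∫ ω, ‖gradient F (X ω)‖ ^ 2 ∂μ + (η * a / 2 * b ^ 2 + L / 2 * η ^ 2 * c) := by
  have hgrad : MemLp (fun ω => gradient F (X ω)) 2 μ := hXL2.gradient_comp hL
  have hpt : ∀ ω, F (X ω - η • G ω) ≤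
      F (X ω) - η * ⟪gradient F (X ω), G ω⟫_ℝ + L / 2 * η ^ 2 * ‖G ω‖ ^ 2 := by
    intro ω
    have h := image_le_add_inner_gradient_add_sq hF hL (X ω) (X ω - η • G ω)
    rw [sub_sub_cancel_left, inner_neg_right, real_inner_smul_right, norm_neg, norm_smul,
      mul_pow, Real.norm_eq_abs, sq_abs] at h
    linarith
  have hcross := integral_inner_ge_of_condExp_ae_eq hm ha
    ((continuous_gradient_of_lipschitz hL).comp_stronglyMeasurable hX) hgrad hG hδ hδb hbias
  have hnoise := integral_le_of_ae_condExp_le hm hsq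
  have hFX := hXL2.integrable_comp_of_lipschitz_gradient hF hL hbdd
  have hinner := (hgrad.integrable_inner hG).const_mul η
  have hFX_sub : Integrable (fun ω => F (X ω) - η * ⟪gradient F (X ω), G ω⟫_ℝ) μ :=
    hFX.sub hinner
  have hG_sq := hG.norm.integrable_sq.const_mul (L / 2 * η ^ 2)
  have hmono : ∫ ω, F (X ω - η • G ω) ∂μ ≤ ∫ ω, (F (X ω) - η * ⟪gradient F (X ω), G ω⟫_ℝ
      + L / 2 * η ^ 2 * ‖G ω‖ ^ 2) ∂μ := integral_mono
    ((hXL2.sub (hG.const_smul η)).integrable_comp_of_lipschitz_gradient hF hL hbdd)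
    (hFX_sub.add hG_sq) hpt
  rw [integral_add hFX_sub hG_sq, integral_sub hFX hinner, integral_const_mul,
    integral_const_mul] at hmono
  nlinarith [mul_le_mul_of_nonneg_left hcross hη,
    mul_le_mul_of_nonneg_left hnoise (by positivity : 0 ≤ L / 2 * η ^ 2)]

theorem sum_integral_norm_gradient_sq_le [IsProbabilityMeasure μ] (ℱ : Filtration ℕ m0)
    (hF : Differentiable ℝ F) (hL : ∀ x y, ‖gradient F x - gradient F y‖ ≤ L * ‖x - y‖)
    (hL0 : 0 ≤ L) (hbdd : BddBelow (Set.range F)) {K : ℕ} {a b c η : ℝ} (ha : 0 ≤ a)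
    (hη : 0 ≤ η) {θ g : ℕ → Ω → E} (hθ : StronglyAdapted ℱ θ) (hθ0 : MemLp (θ 0) 2 μ)
    (hg : ∀ k, MemLp (g k) 2 μ) (hupdate : ∀ k < K, ∀ ω, θ (k + 1) ω = θ k ω - η • g k ω)
    (hbias : ∀ k < K, ∃ δ : Ω → E, StronglyMeasurable[ℱ k] δ ∧ (∀ᵐ ω ∂μ, ‖δ ω‖ ≤ b) ∧
      μ[g k | ℱ k] =ᵐ[μ] fun ω => a • (gradient F (θ k ω) + δ ω))
    (hsq : ∀ k < K, ∀ᵐ ω ∂μ, μ[fun ω => ‖g k ω‖ ^ 2 | ℱ k] ω ≤ c) :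
    η * a / 2 * ∑ k ∈ Finset.range K, ∫ ω, ‖gradient F (θ k ω)‖ ^ 2 ∂μ ≤
      ∫ ω, F (θ 0 ω) ∂μ - sInf (Set.range F) + K * (η * a / 2 * b ^ 2 + L / 2 * η ^ 2 * c) := by
  have hθL2 := memLp_of_eq_sub_smul hθ0 hg hupdate
  have hdescent : ∀ k < K, ∫ ω, F (θ (k + 1) ω) ∂μ ≤ ∫ ω, F (θ k ω) ∂μ
      - η * a / 2 * ∫ ω, ‖gradient F (θ k ω)‖ ^ 2 ∂μ
      + (η * a / 2 * b ^ 2 + L / 2 * η ^ 2 * c) := by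
    intro k hk
    obtain ⟨δ, hδ, hδb, hbias_k⟩ := hbias k hk
    simp_rw [hupdate k hk]
    exact integral_comp_sub_smul_le (ℱ.le k) hF hL hL0 hbdd ha hη (hθ k) (hθL2 k hk.le) (hg k)
      ((hδ.mono (ℱ.le k)).aestronglyMeasurable) hδb hbias_k (hsq k hk)
  have hinf : sInf (Set.range F) ≤ ∫ ω, F (θ K ω) ∂μ :=
    calc sInf (Set.range F) = ∫ _, sInf (Set.range F) ∂μ := by simp
      _ ≤ ∫ ω, F (θ K ω) ∂μ := integral_mono (integrable_const _)
          ((hθL2 K le_rfl).integrable_comp_of_lipschitz_gradient hF hL hbdd)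
          fun ω => csInf_le hbdd ⟨θ K ω, rfl⟩
  rw [Finset.mul_sum]
  linarith [sum_le_of_le_sub_add (u := fun k => ∫ ω, F (θ k ω) ∂μ) hdescent]

end MeasureTheory

theorem exists_eq_pow_four_and_rpow_neg_quarter_eq_inv {K : ℝ} (hK : 0 < K) :
    ∃ t : ℝ, 0 < t ∧ K = t ^ 4 ∧ K ^ (-(1 / 4 : ℝ)) = t⁻¹ := by
  refine ⟨K ^ (1 / 4 : ℝ), by positivity, ?_, Real.rpow_neg hK.le _⟩
  rw [← Real.rpow_natCast, ← Real.rpow_mul hK.le]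
  norm_num

theorem sum_le_of_rate_bound_of_horizon {S Δ t η₀ γ₀ c₁ c₃ C L ε β : ℝ} (ht : 0 < t)
    (hη₀ : 0 < η₀) (hγ₀ : 0 < γ₀) (hc₁ : 0 < c₁) (hε : 0 < ε) (hβ : 0 < β)
    (hK : t ^ 4 ≥ 1 / (ε ^ 2 * β ^ 2) *
      (2 * Δ / (η₀ * γ₀ * c₁) + c₃ ^ 2 * γ₀ ^ 2 + C * L * η₀ * γ₀ / c₁) ^ 2)
    (hrate : η₀ * t⁻¹ * (c₁ * (γ₀ * t⁻¹)) / 2 * S ≤ Δ + t ^ 4 *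
      (η₀ * t⁻¹ * (c₁ * (γ₀ * t⁻¹)) / 2 * (c₃ * (γ₀ * t⁻¹)) ^ 2
        + L / 2 * (η₀ * t⁻¹) ^ 2 * (C * (γ₀ * t⁻¹) ^ 2))) :
    S ≤ t ^ 4 * (ε * β) := by
  set B := 2 * Δ / (η₀ * γ₀ * c₁) + c₃ ^ 2 * γ₀ ^ 2 + C * L * η₀ * γ₀ / c₁ with hBdef
  have hB : B ≤ ε * β * t ^ 2 := by
    have hsq : B ^ 2 ≤ (ε * β * t ^ 2) ^ 2 := by
      rw [ge_iff_le, div_mul_eq_mul_div, one_mul, div_le_iff₀ (by positivity)] at hK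
      linarith
    exact (le_abs_self B).trans ((sq_le_sq.1 hsq).trans_eq (abs_of_pos (by positivity)))
  -- With `η = η₀/t` and `γ = γ₀/t`, the right side of `hrate` is exactly `(η₀γ₀c₁/2) B`.
  have hscaled : η₀ * γ₀ * c₁ / 2 * (S / t ^ 2) ≤ η₀ * γ₀ * c₁ / 2 * B := by
    rw [hBdef]
    convert hrate using 1
    · field_simp
    · field_simp
      ring
  have hS := le_of_mul_le_mul_left hscaled (by positivity)
  rw [div_le_iff₀ (by positivity)] at hS
  nlinarith

theorem ezofl_high_probability_general
    {d : ℕ} {Ω : Type*} {m0 : MeasurableSpace Ω} (μ : Measure Ω) [IsProbabilityMeasure μ]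
    (ℱ : Filtration ℕ m0)
    (F : EuclideanSpace ℝ (Fin d) → ℝ) (μₛ : ℝ)
    (hdiff : Differentiable ℝ F)
    (hsmooth : ∀ x y : EuclideanSpace ℝ (Fin d),
      ‖gradient F x - gradient F y‖ ≤ μₛ * ‖x - y‖)
    (hbdd : BddBelow (Set.range F))
    (K : ℕ) (hK : 1 ≤ K)
    (c₁ c₃ C η₀ γ₀ : ℝ) (hc₁ : 0 < c₁)
    (hη₀ : 0 < η₀) (hγ₀ : 0 < γ₀)
    (η γ : ℝ)
    (hηdef : η = η₀ * (K : ℝ) ^ (-(1 / 4 : ℝ)))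
    (hγdef : γ = γ₀ * (K : ℝ) ^ (-(1 / 4 : ℝ)))
    (θ : ℕ → Ω → EuclideanSpace ℝ (Fin d)) (hadapted : Adapted ℱ θ)
    (θ₀ : EuclideanSpace ℝ (Fin d)) (hθ0 : ∀ ω, θ 0 ω = θ₀)
    (g : ℕ → Ω → EuclideanSpace ℝ (Fin d)) (hgL2 : ∀ k, MemLp (g k) 2 μ)
    (hupdate : ∀ k < K, ∀ ω, θ (k + 1) ω = θ k ω - η • g k ω)
    (hbias : ∀ k < K, ∃ δ : Ω → EuclideanSpace ℝ (Fin d),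
      StronglyMeasurable[ℱ k] δ ∧ (∀ᵐ ω ∂μ, ‖δ ω‖ ≤ c₃ * γ) ∧
        μ[g k | ℱ k] =ᵐ[μ] fun ω => (c₁ * γ) • (gradient F (θ k ω) + δ ω))
    (hsq : ∀ k < K, ∀ᵐ ω ∂μ, (μ[(fun ω' => ‖g k ω'‖ ^ 2) | ℱ k]) ω ≤ C * γ ^ 2)
    (ε β : ℝ) (hε : 0 < ε) (hβ : 0 < β)
    (hKbig : (K : ℝ) ≥ 1 / (ε ^ 2 * β ^ 2) *
      (2 * (F θ₀ - sInf (Set.range F)) / (η₀ * γ₀ * c₁) + c₃ ^ 2 * γ₀ ^ 2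
        + C * μₛ * η₀ * γ₀ / c₁) ^ 2) :
    ENNReal.ofReal (1 - β) ≤
      μ {ω | ∃ k < K, ‖gradient F (θ k ω)‖ ^ 2 < ε} := by
  have hθ0L2 : MemLp (θ 0) 2 μ := by
    rw [funext hθ0]
    exact memLp_const θ₀
  have hθL2 := memLp_of_eq_sub_smul hθ0L2 hgL2 hupdate
  have hsum : ∑ k ∈ Finset.range K, ∫ ω, ‖gradient F (θ k ω)‖ ^ 2 ∂μ ≤ K * (ε * β) := by
    -- On a nontrivial space `hsmooth` forces `0 ≤ μₛ`; on the zero space the gradient vanishes.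
    obtain _ | _ := subsingleton_or_nontrivial (EuclideanSpace ℝ (Fin d))
    · simp only [Subsingleton.elim _ (0 : EuclideanSpace ℝ (Fin d)), norm_zero, ne_eq,
        OfNat.ofNat_ne_zero, not_false_eq_true, zero_pow, integral_zero, Finset.sum_const_zero]
      positivity
    obtain ⟨t, ht, hKt, hinv⟩ :=
      exists_eq_pow_four_and_rpow_neg_quarter_eq_inv (Nat.cast_pos.2 hK)
    rw [hinv] at hηdef hγdef
    subst hηdef hγdef
    have hrate := sum_integral_norm_gradient_sq_le ℱ hdiff hsmooth
      (nonneg_of_norm_sub_le_mul_norm_sub hsmooth) hbdd (by positivity) (by positivity)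
      (fun k => (hadapted k).stronglyMeasurable) hθ0L2 hgL2 hupdate hbias hsq
    simp only [hθ0, integral_const, probReal_univ, one_smul] at hrate
    rw [hKt] at hrate hKbig ⊢
    exact sum_le_of_rate_bound_of_horizon ht hη₀ hγ₀ hc₁ hε hβ hKbig hrate
  exact ofReal_one_sub_le_measure_exists_lt hK hε (fun k _ => ae_of_all _ fun ω => by positivity)
    (fun k hk => ((hθL2 k hk.le).gradient_comp hsmooth).norm.integrable_sq) hsum

/-- High-probability sample-path convergence of EZOFL (Theorem 2, probability part):
if `K ≥ (1/(ε²β²)) (2Δ̂/(η₀γ₀c₁) + c₃²γ₀² + Cμₛη₀γ₀/c₁)²` with `Δ̂ = F(θ₀) − inf F`, then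
`P(min_{0 ≤ k ≤ K−1} ‖∇F(θ_k)‖² < ε) ≥ 1 − β`. -/
theorem ezofl_high_probability
    {d : ℕ} {Ω : Type*} {m0 : MeasurableSpace Ω} (μ : Measure Ω) [IsProbabilityMeasure μ]
    (ℱ : Filtration ℕ m0)
    (F : EuclideanSpace ℝ (Fin d) → ℝ) (μₛ : ℝ)
    (hdiff : Differentiable ℝ F)
    (hsmooth : ∀ x y : EuclideanSpace ℝ (Fin d),
      ‖gradient F x - gradient F y‖ ≤ μₛ * ‖x - y‖)
    (hbdd : BddBelow (Set.range F))
    (K : ℕ) (hK : 1 ≤ K)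
    (c₁ c₃ C η₀ γ₀ : ℝ) (hc₁ : 0 < c₁) (hc₃ : 0 < c₃) (hC : 0 < C)
    (hη₀ : 0 < η₀) (hγ₀ : 0 < γ₀)
    (η γ : ℝ)
    (hηdef : η = η₀ * (K : ℝ) ^ (-(1 / 4 : ℝ)))
    (hγdef : γ = γ₀ * (K : ℝ) ^ (-(1 / 4 : ℝ)))
    (θ : ℕ → Ω → EuclideanSpace ℝ (Fin d)) (hadapted : Adapted ℱ θ)
    (θ₀ : EuclideanSpace ℝ (Fin d)) (hθ0 : ∀ ω, θ 0 ω = θ₀)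
    (g : ℕ → Ω → EuclideanSpace ℝ (Fin d)) (hgL2 : ∀ k, MemLp (g k) 2 μ)
    (hupdate : ∀ k < K, ∀ ω, θ (k + 1) ω = θ k ω - η • g k ω)
    (hbias : ∀ k < K, ∃ δ : Ω → EuclideanSpace ℝ (Fin d),
      StronglyMeasurable[ℱ k] δ ∧ (∀ᵐ ω ∂μ, ‖δ ω‖ ≤ c₃ * γ) ∧
        μ[g k | ℱ k] =ᵐ[μ] fun ω => (c₁ * γ) • (gradient F (θ k ω) + δ ω))
    (hsq : ∀ k < K, ∀ᵐ ω ∂μ, (μ[(fun ω' => ‖g k ω'‖ ^ 2) | ℱ k]) ω ≤ C * γ ^ 2)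
    (ε β : ℝ) (hε : 0 < ε) (hβ : 0 < β)
    (hKbig : (K : ℝ) ≥ 1 / (ε ^ 2 * β ^ 2) *
      (2 * (F θ₀ - sInf (Set.range F)) / (η₀ * γ₀ * c₁) + c₃ ^ 2 * γ₀ ^ 2
        + C * μₛ * η₀ * γ₀ / c₁) ^ 2) :
    ENNReal.ofReal (1 - β) ≤
      μ {ω | ∃ k < K, ‖gradient F (θ k ω)‖ ^ 2 < ε} :=
  ezofl_high_probability_general μ ℱ F μₛ hdiff hsmooth hbdd K hK c₁ c₃ C η₀ γ₀ hc₁ hη₀ hγ₀ η γ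
    hηdef hγdef θ hadapted θ₀ hθ0 g hgL2 hupdate hbias hsq ε β hε hβ hKbig
end

section
/- Under the setting of the finite-horizon rate bound for Algorithm 2 — F : ℝ^d → ℝ differentiable, μ-smooth, bounded below with Δ̂ := F(θ₀) − inf F; step size η = η₀K^{-1/2}; iterates θ_{k+1} = θ_k − η g_k for k = 0, …, K−1 with E[g_k | 𝓗_k] = b₁∇F(θ_k) almost surely and E[‖g_k‖² | 𝓗_k] ≤ C₂ almost surely — if ε, β > 0 and K ≥ (1/(ε²β²)) (Δ̂/(b₁η₀) + η₀μC₂/(2b₁))², then P( min_{0 ≤ k ≤ K−1} ‖∇F(θ_k)‖² < ε ) ≥ 1 − β. -/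
/-!
For a `μₛ`-smooth `F` the descent lemma along `θ_{k+1} = θ_k - η g_k`, averaged with the pull-out
property of conditional expectation, gives
`η b₁ E‖∇F(θ_k)‖² ≤ E F(θ_k) - E F(θ_{k+1}) + μₛ η² C₂ / 2`.
Telescoping over `k < K` and bounding `E F(θ_K)` below by `inf F` yields, for `η = η₀ / √K`,
`(1/K) ∑_k E‖∇F(θ_k)‖² ≤ (Δ̂/(b₁η₀) + η₀μₛC₂/(2b₁)) / √K ≤ εβ`.
On the event that `‖∇F(θ_k)‖² ≥ ε` for every `k < K` the average of the `‖∇F(θ_k)‖²` is at least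
`ε`, so by Markov's inequality that event has probability at most `β`.
-/

open MeasureTheory

open scoped RealInnerProductSpace

theorem nonneg_of_forall_norm_sub_le {E G : Type*} [NormedAddCommGroup E] [Nontrivial E]
    [SeminormedAddCommGroup G] {f : E → G} {L : ℝ} (h : ∀ x y, ‖f x - f y‖ ≤ L * ‖x - y‖) :
    0 ≤ L := by
  obtain ⟨x, hx⟩ := exists_ne (0 : E)
  exact nonneg_of_mul_nonneg_left ((norm_nonneg _).trans (h x 0)) (by simpa using hx)

section Smooth

variable {E : Type*} [NormedAddCommGroup E] [InnerProductSpace ℝ E] [CompleteSpace E]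
  {F : E → ℝ} {L : ℝ}

theorem abs_sub_sub_inner_gradient_le (hF : Differentiable ℝ F)
    (hL : ∀ x y, ‖gradient F x - gradient F y‖ ≤ L * ‖x - y‖) (x y : E) :
    |F y - F x - ⟪gradient F x, y - x⟫| ≤ L / 2 * ‖y - x‖ ^ 2 := by
  set v := y - x
  -- `φ t := F (x + t • v) - F x - t ⟪∇F x, v⟫` has `|φ' t| ≤ L t ‖v‖²`, so it stays within the
  -- parabola `L / 2 ‖v‖² t²` on `[0, 1]`.
  have hφ : ∀ t : ℝ, HasDerivAt (fun t : ℝ => F (x + t • v) - F x - t * ⟪gradient F x, v⟫)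
      ⟪gradient F (x + t • v) - gradient F x, v⟫ t := by
    intro t
    have hline : HasDerivAt (fun t : ℝ => x + t • v) v t := by
      simpa using ((hasDerivAt_id t).smul_const v).const_add x
    refine ((((hF _).hasGradientAt.hasFDerivAt.comp_hasDerivAt t hline).sub_const (F x)).sub
      ((hasDerivAt_id t).mul_const ⟪gradient F x, v⟫)).congr_deriv ?_
    simp [inner_sub_left]
  have hB : ∀ t : ℝ, HasDerivAt (fun t : ℝ => L / 2 * ‖v‖ ^ 2 * t ^ 2) (L * ‖v‖ ^ 2 * t) t := by
    intro t
    refine ((hasDerivAt_pow 2 t).const_mul (L / 2 * ‖v‖ ^ 2)).congr_deriv ?_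
    simp only [Nat.cast_ofNat, Nat.add_one_sub_one, pow_one]; ring
  have bound : ∀ t ∈ Set.Ico (0 : ℝ) 1,
      ‖⟪gradient F (x + t • v) - gradient F x, v⟫‖ ≤ L * ‖v‖ ^ 2 * t := fun t ht => calc
    _ ≤ ‖gradient F (x + t • v) - gradient F x‖ * ‖v‖ := norm_inner_le_norm _ _
    _ ≤ L * ‖x + t • v - x‖ * ‖v‖ := by gcongr; exact hL _ _
    _ = L * ‖v‖ ^ 2 * t := by
      rw [add_sub_cancel_left, norm_smul, Real.norm_of_nonneg ht.1]; ring
  have := image_norm_le_of_norm_deriv_right_le_deriv_boundary (a := 0) (b := 1)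
    (fun t _ => (hφ t).continuousAt.continuousWithinAt) (fun t _ => (hφ t).hasDerivWithinAt)
    (by simp) hB bound (Set.right_mem_Icc.2 zero_le_one)
  simpa [v] using this

theorem lipschitzWith_gradient (hL : ∀ x y, ‖gradient F x - gradient F y‖ ≤ L * ‖x - y‖) :
    LipschitzWith L.toNNReal (gradient F) := by
  refine LipschitzWith.of_dist_le_mul fun x y => ?_
  rw [dist_eq_norm, dist_eq_norm, Real.coe_toNNReal']
  exact (hL x y).trans (by gcongr; exact le_max_left L 0)

theorem norm_gradient_le_add (hL : ∀ x y, ‖gradient F x - gradient F y‖ ≤ L * ‖x - y‖)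
    (x y : E) : ‖gradient F y‖ ≤ ‖gradient F x‖ + L * ‖y - x‖ := by
  linarith [norm_sub_norm_le (gradient F y) (gradient F x), hL y x]

theorem abs_le_abs_add_norm_gradient_mul_add (hF : Differentiable ℝ F)
    (hL : ∀ x y, ‖gradient F x - gradient F y‖ ≤ L * ‖x - y‖) (x y : E) :
    |F y| ≤ |F x| + ‖gradient F x‖ * ‖y - x‖ + L / 2 * ‖y - x‖ ^ 2 := by
  have h := abs_sub_sub_inner_gradient_le hF hL x y
  have hi := abs_real_inner_le_norm (gradient F x) (y - x)
  rw [abs_le] at h hi ⊢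
  constructor <;> linarith [neg_abs_le (F x), le_abs_self (F x)]

theorem apply_sub_smul_le (hF : Differentiable ℝ F)
    (hL : ∀ x y, ‖gradient F x - gradient F y‖ ≤ L * ‖x - y‖) (x g : E) (η : ℝ) :
    F (x - η • g) ≤ F x - η * ⟪gradient F x, g⟫ + L * η ^ 2 / 2 * ‖g‖ ^ 2 := by
  have h := (abs_le.1 (abs_sub_sub_inner_gradient_le hF hL x (x - η • g))).2
  rw [sub_sub_cancel_left, inner_neg_right, real_inner_smul_right, norm_neg, norm_smul,
    Real.norm_eq_abs, mul_pow, sq_abs] at h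
  linarith

end Smooth

section Probability

variable {Ω : Type*} {m m0 : MeasurableSpace Ω} {μ : Measure Ω}

theorem MeasureTheory.MemLp.integrable_inner_s18 {E : Type*} [NormedAddCommGroup E]
    [InnerProductSpace ℝ E] {f g : Ω → E} (hf : MemLp f 2 μ) (hg : MemLp g 2 μ) :
    Integrable (fun ω => ⟪f ω, g ω⟫) μ :=
  memLp_one_iff_integrable.1 <| hf.of_bilin (fun x y => ⟪x, y⟫) 1 hg
    (hf.aestronglyMeasurable.inner hg.aestronglyMeasurable)
    (ae_of_all _ fun ω => by simpa using nnnorm_inner_le_nnnorm (𝕜 := ℝ) (f ω) (g ω))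

theorem integral_inner_condExp {E : Type*} [NormedAddCommGroup E] [InnerProductSpace ℝ E]
    [CompleteSpace E] [IsFiniteMeasure μ] (hm : m ≤ m0) {v g : Ω → E}
    (hv : StronglyMeasurable[m] v) (hv2 : MemLp v 2 μ) (hg : MemLp g 2 μ) :
    ∫ ω, ⟪v ω, g ω⟫ ∂μ = ∫ ω, ⟪v ω, μ[g|m] ω⟫ ∂μ := by
  rw [← integral_condExp hm]
  exact integral_congr_ae <| condExp_bilin_of_stronglyMeasurable_left (innerSL ℝ) hv
    (hv2.integrable_inner_s18 hg) (hg.integrable one_le_two)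

theorem integral_le_of_condExp_le [IsProbabilityMeasure μ] (hm : m ≤ m0) {f : Ω → ℝ} {C : ℝ}
    (h : ∀ᵐ ω ∂μ, μ[f|m] ω ≤ C) : ∫ ω, f ω ∂μ ≤ C := by
  rw [← integral_condExp hm]
  simpa using integral_mono_ae integrable_condExp (integrable_const C) h

theorem memLp_of_eq_sub_smul {E : Type*} [NormedAddCommGroup E] [NormedSpace ℝ E]
    {p : ENNReal} {θ g : ℕ → Ω → E} {K : ℕ} {η : ℝ} (h0 : MemLp (θ 0) p μ)
    (hg : ∀ k < K, MemLp (g k) p μ) (hupdate : ∀ k < K, ∀ ω, θ (k + 1) ω = θ k ω - η • g k ω) :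
    ∀ k ≤ K, MemLp (θ k) p μ := by
  intro k
  induction k with
  | zero => exact fun _ => h0
  | succ k ih =>
    intro hk
    exact ((ih (Nat.le_of_succ_le hk)).sub ((hg k hk).const_smul η)).ae_eq
      (ae_of_all _ fun ω => (hupdate k hk ω).symm)

theorem mul_measureReal_forall_le_le_average [IsFiniteMeasure μ] {f : ℕ → Ω → ℝ} {K : ℕ}
    (hK : 0 < K) (hf0 : ∀ k, 0 ≤ f k) (hf : ∀ k < K, Integrable (f k) μ) {ε : ℝ} (hε : 0 ≤ ε) :
    ε * μ.real {ω | ∀ k < K, ε ≤ f k ω} ≤ (∑ k ∈ Finset.range K, ∫ ω, f k ω ∂μ) / K := by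
  have hsum : Integrable (fun ω => ∑ k ∈ Finset.range K, f k ω) μ :=
    integrable_finsetSum _ fun k hk => hf k (Finset.mem_range.1 hk)
  have hsub : {ω | ∀ k < K, ε ≤ f k ω} ⊆ {ω | K * ε ≤ ∑ k ∈ Finset.range K, f k ω} :=
    fun ω hω => by
      simpa using Finset.card_nsmul_le_sum _ _ ε fun k hk => hω k (Finset.mem_range.1 hk)
  have hmarkov := mul_meas_ge_le_integral_of_nonneg
    (ae_of_all _ fun ω => Finset.sum_nonneg fun k _ => hf0 k ω) hsum (K * ε)
  rw [integral_finsetSum _ fun k hk => hf k (Finset.mem_range.1 hk)] at hmarkov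
  rw [le_div_iff₀ (by positivity)]
  calc ε * μ.real {ω | ∀ k < K, ε ≤ f k ω} * K
      = K * ε * μ.real {ω | ∀ k < K, ε ≤ f k ω} := by ring
    _ ≤ K * ε * μ.real {ω | K * ε ≤ ∑ k ∈ Finset.range K, f k ω} :=
        mul_le_mul_of_nonneg_left (measureReal_mono hsub) (by positivity)
    _ ≤ _ := hmarkov

theorem ofReal_one_sub_le_measure_of_compl_le [IsProbabilityMeasure μ] {s : Set Ω} {β : ℝ}
    (hβ : 0 ≤ β) (h : μ sᶜ ≤ ENNReal.ofReal β) : ENNReal.ofReal (1 - β) ≤ μ s := by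
  rw [ENNReal.ofReal_sub _ hβ, ENNReal.ofReal_one, tsub_le_iff_right]
  calc 1 = μ (s ∪ sᶜ) := by rw [Set.union_compl_self, measure_univ]
    _ ≤ μ s + μ sᶜ := measure_union_le _ _
    _ ≤ μ s + ENNReal.ofReal β := add_le_add_right h _

end Probability

section StochasticGradient

variable {Ω E : Type*} {m m0 : MeasurableSpace Ω} {μ : Measure Ω}
  [NormedAddCommGroup E] [InnerProductSpace ℝ E] [CompleteSpace E] {F : E → ℝ} {L : ℝ}

theorem memLp_gradient_comp [IsFiniteMeasure μ]
    (hL : ∀ x y, ‖gradient F x - gradient F y‖ ≤ L * ‖x - y‖) {p : ENNReal} {X : Ω → E}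
    (hX : MemLp X p μ) : MemLp (fun ω => gradient F (X ω)) p μ := by
  refine ((memLp_const ‖gradient F 0‖).add (hX.norm.const_mul L)).of_le
    ((lipschitzWith_gradient hL).continuous.comp_aestronglyMeasurable hX.aestronglyMeasurable)
    (ae_of_all _ fun ω => ?_)
  simpa using (norm_gradient_le_add hL 0 (X ω)).trans (le_abs_self _)

theorem integrable_comp_of_memLp_two [IsFiniteMeasure μ] (hF : Differentiable ℝ F)
    (hL : ∀ x y, ‖gradient F x - gradient F y‖ ≤ L * ‖x - y‖) {X : Ω → E} (hX : MemLp X 2 μ) :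
    Integrable (fun ω => F (X ω)) μ := by
  refine (((integrable_const |F 0|).add
    ((hX.norm.integrable one_le_two).const_mul ‖gradient F 0‖)).add
    ((hX.integrable_norm_pow two_ne_zero).const_mul (L / 2))).mono'
    (hF.continuous.comp_aestronglyMeasurable hX.aestronglyMeasurable) (ae_of_all _ fun ω => ?_)
  simpa using abs_le_abs_add_norm_gradient_mul_add hF hL 0 (X ω)

theorem mul_integral_norm_gradient_sq_le [IsProbabilityMeasure μ] (hm : m ≤ m0)
    (hF : Differentiable ℝ F) (hL : ∀ x y, ‖gradient F x - gradient F y‖ ≤ L * ‖x - y‖)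
    (hL0 : 0 ≤ L) {X G : Ω → E} (hX : StronglyMeasurable[m] X) (hX2 : MemLp X 2 μ)
    (hG : MemLp G 2 μ) {b C : ℝ} (hmean : μ[G|m] =ᵐ[μ] fun ω => b • gradient F (X ω))
    (hsq : ∀ᵐ ω ∂μ, μ[fun ω => ‖G ω‖ ^ 2|m] ω ≤ C) (η : ℝ) :
    η * b * ∫ ω, ‖gradient F (X ω)‖ ^ 2 ∂μ
      ≤ ∫ ω, F (X ω) ∂μ - ∫ ω, F (X ω - η • G ω) ∂μ + L * η ^ 2 / 2 * C := by
  have hV := memLp_gradient_comp (μ := μ) hL hX2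
  have hinner : ∫ ω, ⟪gradient F (X ω), G ω⟫ ∂μ = b * ∫ ω, ‖gradient F (X ω)‖ ^ 2 ∂μ := by
    rw [integral_inner_condExp hm
      ((lipschitzWith_gradient hL).continuous.comp_stronglyMeasurable hX) hV hG,
      integral_congr_ae (hmean.mono fun ω hω => by rw [hω]), ← integral_const_mul]
    simp only [inner_smul_right, real_inner_self_eq_norm_sq]
  have hG2 : ∫ ω, ‖G ω‖ ^ 2 ∂μ ≤ C := integral_le_of_condExp_le hm hsq
  have hFX := integrable_comp_of_memLp_two hF hL hX2
  have hinnerX := (hV.integrable_inner_s18 hG).const_mul η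
  have hGX := (hG.integrable_norm_pow two_ne_zero).const_mul (L * η ^ 2 / 2)
  have hFinnerX : Integrable (fun ω => F (X ω) - η * ⟪gradient F (X ω), G ω⟫) μ :=
    hFX.sub hinnerX
  have hdescent : ∫ ω, F (X ω - η • G ω) ∂μ ≤ ∫ ω, (F (X ω)
      - η * ⟪gradient F (X ω), G ω⟫ + L * η ^ 2 / 2 * ‖G ω‖ ^ 2) ∂μ :=
    integral_mono (integrable_comp_of_memLp_two hF hL (hX2.sub (hG.const_smul η)))
      (hFinnerX.add hGX) fun ω => apply_sub_smul_le hF hL (X ω) (G ω) η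
  rw [integral_add hFinnerX hGX, integral_sub hFX hinnerX,
    integral_const_mul, integral_const_mul, hinner] at hdescent
  nlinarith [mul_le_mul_of_nonneg_left hG2 (by positivity : 0 ≤ L * η ^ 2 / 2)]

theorem mul_sum_integral_norm_gradient_sq_le [IsProbabilityMeasure μ] (ℱ : Filtration ℕ m0)
    (hF : Differentiable ℝ F) (hL : ∀ x y, ‖gradient F x - gradient F y‖ ≤ L * ‖x - y‖)
    (hL0 : 0 ≤ L) (hbdd : BddBelow (Set.range F)) {K : ℕ} {b C η : ℝ}
    {θ g : ℕ → Ω → E} (hadapted : StronglyAdapted ℱ θ) {θ₀ : E} (hθ0 : ∀ ω, θ 0 ω = θ₀)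
    (hg : ∀ k < K, MemLp (g k) 2 μ)
    (hupdate : ∀ k < K, ∀ ω, θ (k + 1) ω = θ k ω - η • g k ω)
    (hmean : ∀ k < K, μ[g k|ℱ k] =ᵐ[μ] fun ω => b • gradient F (θ k ω))
    (hsq : ∀ k < K, ∀ᵐ ω ∂μ, μ[fun ω => ‖g k ω‖ ^ 2|ℱ k] ω ≤ C) :
    η * b * ∑ k ∈ Finset.range K, ∫ ω, ‖gradient F (θ k ω)‖ ^ 2 ∂μ
      ≤ F θ₀ - sInf (Set.range F) + K * (L * η ^ 2 / 2 * C) := by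
  have hθ2 := memLp_of_eq_sub_smul (μ := μ)
    ((memLp_const θ₀).ae_eq (ae_of_all _ fun ω => (hθ0 ω).symm)) hg hupdate
  have hstep : ∀ k < K, η * b * ∫ ω, ‖gradient F (θ k ω)‖ ^ 2 ∂μ
      ≤ ∫ ω, F (θ k ω) ∂μ - ∫ ω, F (θ (k + 1) ω) ∂μ + L * η ^ 2 / 2 * C := fun k hk => by
    simpa only [hupdate k hk] using mul_integral_norm_gradient_sq_le (ℱ.le k) hF hL hL0 (hadapted k)
      (hθ2 k hk.le) (hg k hk) (hmean k hk) (hsq k hk) η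
  have hfirst : ∫ ω, F (θ 0 ω) ∂μ = F θ₀ := by simp [hθ0]
  have hlast : sInf (Set.range F) ≤ ∫ ω, F (θ K ω) ∂μ := by
    simpa using integral_mono (integrable_const _)
      (integrable_comp_of_memLp_two hF hL (hθ2 K le_rfl)) fun ω => csInf_le hbdd ⟨θ K ω, rfl⟩
  calc η * b * ∑ k ∈ Finset.range K, ∫ ω, ‖gradient F (θ k ω)‖ ^ 2 ∂μ
      ≤ ∑ k ∈ Finset.range K,
          (∫ ω, F (θ k ω) ∂μ - ∫ ω, F (θ (k + 1) ω) ∂μ + L * η ^ 2 / 2 * C) := by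
        rw [Finset.mul_sum]
        exact Finset.sum_le_sum fun k hk => hstep k (Finset.mem_range.1 hk)
    _ = ∫ ω, F (θ 0 ω) ∂μ - ∫ ω, F (θ K ω) ∂μ + K * (L * η ^ 2 / 2 * C) := by
        rw [Finset.sum_add_distrib, Finset.sum_range_sub', Finset.sum_const, Finset.card_range,
          nsmul_eq_mul]
    _ ≤ F θ₀ - sInf (Set.range F) + K * (L * η ^ 2 / 2 * C) := by linarith

end StochasticGradient

theorem div_le_div_sqrt_of_step_size {K S Δ L C η₀ b : ℝ} (hK : 0 < K) (hb : 0 < b)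
    (hη₀ : 0 < η₀)
    (h : η₀ * K ^ (-(1 / 2 : ℝ)) * b * S ≤ Δ + K * (L * (η₀ * K ^ (-(1 / 2 : ℝ))) ^ 2 / 2 * C)) :
    S / K ≤ (Δ / (b * η₀) + η₀ * L * C / (2 * b)) / √K := by
  rw [Real.rpow_neg hK.le, ← Real.sqrt_eq_rpow] at h
  field_simp at h ⊢
  rw [Real.sq_sqrt hK.le] at h
  linarith

theorem div_sqrt_le_of_one_div_sq_mul_sq_le {A K c : ℝ} (hK : 0 < K) (hc : 0 < c)
    (h : 1 / c ^ 2 * A ^ 2 ≤ K) : A / √K ≤ c := by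
  rw [div_le_iff₀ (Real.sqrt_pos.2 hK)]
  refine (abs_le_of_sq_le_sq' ?_ (by positivity)).2
  rw [one_div, inv_mul_le_iff₀ (by positivity)] at h
  rw [mul_pow, Real.sq_sqrt hK.le]
  linarith

theorem efofl_high_probability_general
    {d : ℕ} {Ω : Type*} {m0 : MeasurableSpace Ω} (μ : Measure Ω) [IsProbabilityMeasure μ]
    (ℱ : Filtration ℕ m0)
    (F : EuclideanSpace ℝ (Fin d) → ℝ) (μₛ : ℝ)
    (hdiff : Differentiable ℝ F)
    (hsmooth : ∀ x y : EuclideanSpace ℝ (Fin d),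
      ‖gradient F x - gradient F y‖ ≤ μₛ * ‖x - y‖)
    (hbdd : BddBelow (Set.range F))
    (K : ℕ) (hK : 1 ≤ K)
    (b₁ C₂ η₀ : ℝ) (hb₁ : 0 < b₁) (hη₀ : 0 < η₀)
    (η : ℝ) (hηdef : η = η₀ * (K : ℝ) ^ (-(1 / 2 : ℝ)))
    (θ : ℕ → Ω → EuclideanSpace ℝ (Fin d)) (hadapted : StronglyAdapted ℱ θ)
    (θ₀ : EuclideanSpace ℝ (Fin d)) (hθ0 : ∀ ω, θ 0 ω = θ₀)
    (g : ℕ → Ω → EuclideanSpace ℝ (Fin d)) (hgL2 : ∀ k, MemLp (g k) 2 μ)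
    (hupdate : ∀ k < K, ∀ ω, θ (k + 1) ω = θ k ω - η • g k ω)
    (hmean : ∀ k < K, μ[g k | ℱ k] =ᵐ[μ] fun ω => b₁ • gradient F (θ k ω))
    (hsq : ∀ k < K, ∀ᵐ ω ∂μ, (μ[(fun ω' => ‖g k ω'‖ ^ 2) | ℱ k]) ω ≤ C₂)
    (ε β : ℝ) (hε : 0 < ε) (hβ : 0 < β)
    (hKbig : (K : ℝ) ≥ 1 / (ε ^ 2 * β ^ 2) *
      ((F θ₀ - sInf (Set.range F)) / (b₁ * η₀) + η₀ * μₛ * C₂ / (2 * b₁)) ^ 2) :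
    ENNReal.ofReal (1 - β) ≤
      μ {ω | ∃ k < K, ‖gradient F (θ k ω)‖ ^ 2 < ε} := by
  -- On the zero space `hsmooth` does not force `0 ≤ μₛ`, but there every gradient vanishes.
  rcases subsingleton_or_nontrivial (EuclideanSpace ℝ (Fin d)) with hE | hE
  · have huniv : {ω | ∃ k < K, ‖gradient F (θ k ω)‖ ^ 2 < ε} = Set.univ :=
      Set.eq_univ_of_forall fun ω => ⟨0, hK, by simpa [Subsingleton.elim (gradient F (θ 0 ω)) 0]⟩
    rw [huniv, measure_univ]
    exact ENNReal.ofReal_le_one.2 (by linarith)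
  subst hηdef
  have hθ2 := memLp_of_eq_sub_smul (μ := μ)
    ((memLp_const θ₀).ae_eq (ae_of_all _ fun ω => (hθ0 ω).symm)) (fun k _ => hgL2 k) hupdate
  have hK0 : (0 : ℝ) < K := by exact_mod_cast hK
  have hrate := div_le_div_sqrt_of_step_size hK0 hb₁ hη₀ <|
    mul_sum_integral_norm_gradient_sq_le ℱ hdiff hsmooth (nonneg_of_forall_norm_sub_le hsmooth)
      hbdd hadapted hθ0 (fun k _ => hgL2 k) hupdate hmean hsq
  rw [← mul_pow] at hKbig
  have hA := div_sqrt_le_of_one_div_sq_mul_sq_le hK0 (mul_pos hε hβ) hKbig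
  have hmarkov := mul_measureReal_forall_le_le_average (μ := μ)
    (f := fun k ω => ‖gradient F (θ k ω)‖ ^ 2) (by omega) (fun k ω => sq_nonneg _)
    (fun k hk => (memLp_gradient_comp hsmooth (hθ2 k hk.le)).integrable_norm_pow two_ne_zero)
    hε.le
  refine ofReal_one_sub_le_measure_of_compl_le hβ.le ?_
  have hcompl : {ω | ∃ k < K, ‖gradient F (θ k ω)‖ ^ 2 < ε}ᶜ
      = {ω | ∀ k < K, ε ≤ ‖gradient F (θ k ω)‖ ^ 2} := by
    ext; simp
  rw [hcompl, ← ofReal_measureReal]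
  exact ENNReal.ofReal_le_ofReal (le_of_mul_le_mul_left (by linarith) hε)

/-- High-probability sample-path convergence of EFOFL (Theorem 4, probability part):
if `K ≥ (1/(ε²β²)) (Δ̂/(b₁η₀) + η₀μₛC₂/(2b₁))²` with `Δ̂ = F(θ₀) − inf F`, then
`P(min_{0 ≤ k ≤ K−1} ‖∇F(θ_k)‖² < ε) ≥ 1 − β`. -/
theorem efofl_high_probability
    {d : ℕ} {Ω : Type*} {m0 : MeasurableSpace Ω} (μ : Measure Ω) [IsProbabilityMeasure μ]
    (ℱ : Filtration ℕ m0)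
    (F : EuclideanSpace ℝ (Fin d) → ℝ) (μₛ : ℝ)
    (hdiff : Differentiable ℝ F)
    (hsmooth : ∀ x y : EuclideanSpace ℝ (Fin d),
      ‖gradient F x - gradient F y‖ ≤ μₛ * ‖x - y‖)
    (hbdd : BddBelow (Set.range F))
    (K : ℕ) (hK : 1 ≤ K)
    (b₁ C₂ η₀ : ℝ) (hb₁ : 0 < b₁) (hC₂ : 0 < C₂) (hη₀ : 0 < η₀)
    (η : ℝ) (hηdef : η = η₀ * (K : ℝ) ^ (-(1 / 2 : ℝ)))
    (θ : ℕ → Ω → EuclideanSpace ℝ (Fin d)) (hadapted : StronglyAdapted ℱ θ)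
    (θ₀ : EuclideanSpace ℝ (Fin d)) (hθ0 : ∀ ω, θ 0 ω = θ₀)
    (g : ℕ → Ω → EuclideanSpace ℝ (Fin d)) (hgL2 : ∀ k, MemLp (g k) 2 μ)
    (hupdate : ∀ k < K, ∀ ω, θ (k + 1) ω = θ k ω - η • g k ω)
    (hmean : ∀ k < K, μ[g k | ℱ k] =ᵐ[μ] fun ω => b₁ • gradient F (θ k ω))
    (hsq : ∀ k < K, ∀ᵐ ω ∂μ, (μ[(fun ω' => ‖g k ω'‖ ^ 2) | ℱ k]) ω ≤ C₂)
    (ε β : ℝ) (hε : 0 < ε) (hβ : 0 < β)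
    (hKbig : (K : ℝ) ≥ 1 / (ε ^ 2 * β ^ 2) *
      ((F θ₀ - sInf (Set.range F)) / (b₁ * η₀) + η₀ * μₛ * C₂ / (2 * b₁)) ^ 2) :
    ENNReal.ofReal (1 - β) ≤
      μ {ω | ∃ k < K, ‖gradient F (θ k ω)‖ ^ 2 < ε} :=
  efofl_high_probability_general μ ℱ F μₛ hdiff hsmooth hbdd K hK b₁ C₂ η₀ hb₁ hη₀ η hηdef θ
    hadapted θ₀ hθ0 g hgL2 hupdate hmean hsq ε β hε hβ hKbig
end
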